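/- arXiv:2112.11616 — 6 statements merged into one kernel-verified Lean document; each statement's English description precedes it below -/
import Mathlib

section
/- Let N ≥ 1 and let J^N = [-1,1]^N be the N-dimensional cube. For i = 1,…,N, denote by J_i^+ the face {x ∈ J^N : x_i = 1} and by J_i^- the face {x ∈ J^N : x_i = -1}. Let f_1,…,f_N be continuous real-valued functions on J^N such that for each i, f_i(x) ≥ 0 for all x ∈ J_i^+ and f_i(x) ≤ 0 for all x ∈ J_i^-. Then there exists a point x̂ ∈ J^N such that f_i(x̂) = 0 for every i = 1,…,N. -/
open Finset
namespace PM



/-- extend a permutation of `Fin M` to `Fin (M+1)`: position `last ↦ 0`,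
position `castSucc m ↦ (e m).succ`. -/
def ext {M : ℕ} (e : Equiv.Perm (Fin M)) : Equiv.Perm (Fin (M + 1)) where
  toFun := Fin.lastCases 0 (fun m => (e m).succ)
  invFun := Fin.cases (Fin.last M) (fun i => (e.symm i).castSucc)
  left_inv := by
    intro m
    induction m using Fin.lastCases with
    | last => simp
    | cast m => simp
  right_inv := by
    intro i
    induction i using Fin.cases with
    | zero => simp
    | succ i => simp

@[simp] lemma ext_last {M : ℕ} (e : Equiv.Perm (Fin M)) : ext e (Fin.last M) = 0 := by
  simp [ext]

@[simp] lemma ext_castSucc {M : ℕ} (e : Equiv.Perm (Fin M)) (m : Fin M) :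
    ext e m.castSucc = (e m).succ := by simp [ext]

@[simp] lemma ext_symm_zero {M : ℕ} (e : Equiv.Perm (Fin M)) : (ext e).symm 0 = Fin.last M := by
  simp [ext]

@[simp] lemma ext_symm_succ {M : ℕ} (e : Equiv.Perm (Fin M)) (i : Fin M) :
    (ext e).symm i.succ = (e.symm i).castSucc := by simp [ext]

variable {N n : ℕ}

/-- The simplices of the Kuhn triangulation of `[0,n]^N`. -/
abbrev Simp (N n : ℕ) := (Fin N → Fin n) × Equiv.Perm (Fin N)

/-- `k`-th vertex of a Kuhn simplex. -/
def vert (s : Simp N n) (k : Fin (N + 1)) : Fin N → ℕ :=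
  fun i => (s.1 i : ℕ) + if (s.2.symm i : ℕ) < (k : ℕ) then 1 else 0

lemma vert_le (s : Simp N n) (k : Fin (N + 1)) (i : Fin N) : vert s k i ≤ n := by
  have := (s.1 i).isLt
  unfold vert; split <;> omega

def IsComplete (ℓ : (Fin N → ℕ) → Fin (N + 1)) (s : Simp N n) : Prop :=
  ∀ m : Fin (N + 1), ∃ k, ℓ (vert s k) = m

def IsDoor (ℓ : (Fin N → ℕ) → Fin (N + 1)) (s : Simp N n) (k : Fin (N + 1)) : Prop :=
  ∀ j : Fin N, ∃ k', k' ≠ k ∧ ℓ (vert s k') = j.succ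

open scoped Classical

variable {N : ℕ}

def DoorAt (L : Fin (N + 1) → Fin (N + 1)) (k : Fin (N + 1)) : Prop :=
  ∀ j : Fin N, ∃ k', k' ≠ k ∧ L k' = j.succ

lemma doors_of_surj {L : Fin (N + 1) → Fin (N + 1)} (hs : Function.Surjective L) :
    (univ.filter (DoorAt L)).card = 1 := by
  have hi : Function.Injective L := Finite.injective_iff_surjective.2 hs
  obtain ⟨k₀, hk₀⟩ := hs 0
  rw [Finset.card_eq_one]
  refine ⟨k₀, ?_⟩
  ext k
  simp only [Finset.mem_filter, Finset.mem_univ, true_and, Finset.mem_singleton]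
  constructor
  · intro hd
    by_contra hne
    have h1 : L k ≠ 0 := by
      intro h; exact hne (hi (h.trans hk₀.symm))
    obtain ⟨j₀, hj₀⟩ := Fin.exists_succ_eq.2 h1
    obtain ⟨k', hk', hLk'⟩ := hd j₀
    exact hk' (hi (hLk'.trans hj₀))
  · rintro rfl j
    obtain ⟨k', hk'⟩ := hs j.succ
    exact ⟨k', fun h => (Fin.succ_ne_zero j) (by rw [← hk', h, hk₀]), hk'⟩

lemma doors_of_not_surj {L : Fin (N + 1) → Fin (N + 1)} (hs : ¬ Function.Surjective L) :
    Even (univ.filter (DoorAt L)).card := by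
  by_cases hd : ∃ k₀, DoorAt L k₀
  · obtain ⟨k₀, h₀⟩ := hd
    have h₀' := h₀
    choose w hw hLw using h₀'
    have hwinj : Function.Injective w := fun a b hab => by
      have := (hLw a).symm.trans (by rw [hab, hLw b])
      exact Fin.succ_injective _ this
    have hLk₀ : L k₀ ≠ 0 := by
      intro h
      apply hs
      intro m
      induction m using Fin.cases with
      | zero => exact ⟨k₀, h⟩
      | succ j => exact ⟨w j, hLw j⟩
    obtain ⟨j₀, hj₀⟩ := Fin.exists_succ_eq.2 hLk₀
    set k₁ := w j₀ with hk₁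
    have hk₁ne : k₁ ≠ k₀ := hw j₀
    have h₁ : DoorAt L k₁ := by
      intro j
      by_cases hj : j = j₀
      · exact ⟨k₀, fun h => hk₁ne h.symm, by rw [hj, hj₀]⟩
      · exact ⟨w j, fun h => hj (hwinj h), hLw j⟩
    have honly : ∀ k, DoorAt L k → k = k₀ ∨ k = k₁ := by
      intro k hk
      by_contra hcon
      push_neg at hcon
      choose u hu hLu using hk
      have huinj : Function.Injective u := fun a b hab => by
        have := (hLu a).symm.trans (by rw [hab, hLu b])
        exact Fin.succ_injective _ this
      have himg : Finset.image u univ = Finset.univ.erase k := by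
        apply Finset.eq_of_subset_of_card_le
        · intro x hx
          simp only [Finset.mem_image] at hx
          obtain ⟨j, _, rfl⟩ := hx
          exact Finset.mem_erase.2 ⟨hu j, Finset.mem_univ _⟩
        · rw [Finset.card_erase_of_mem (Finset.mem_univ _),
            Finset.card_image_of_injective _ huinj]
          simp
      have hmem : ∀ y, y ≠ k → ∃ j, u j = y := by
        intro y hy
        have : y ∈ Finset.image u univ := himg ▸ Finset.mem_erase.2 ⟨hy, Finset.mem_univ _⟩
        simpa using this
      obtain ⟨j₁, hj₁⟩ := hmem k₀ (Ne.symm hcon.1)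
      obtain ⟨j₂, hj₂⟩ := hmem k₁ (Ne.symm hcon.2)
      have e₁ : j₁ = j₀ := Fin.succ_injective _ (by rw [hj₀, ← hj₁, hLu])
      have e₂ : j₂ = j₀ := Fin.succ_injective _ (by
        have h1 : L (u j₂) = j₀.succ := by rw [hj₂, hLw j₀]
        rw [← h1, hLu])
      exact hk₁ne (by rw [← hj₂, e₂, ← e₁, hj₁])
    have : univ.filter (DoorAt L) = {k₀, k₁} := by
      ext k
      simp only [Finset.mem_filter, Finset.mem_univ, true_and, Finset.mem_insert,
        Finset.mem_singleton]
      constructor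
      · exact honly k
      · rintro (rfl | rfl)
        · exact h₀
        · exact h₁
    rw [this, Finset.card_insert_of_notMem (by simpa using hk₁ne.symm), Finset.card_singleton]
    decide
  · push_neg at hd
    have : univ.filter (DoorAt L) = ∅ := by
      ext k; simp [hd k]
    simp [this]

lemma odd_doors_iff (L : Fin (N + 1) → Fin (N + 1)) :
    Odd (univ.filter (DoorAt L)).card ↔ Function.Surjective L := by
  constructor
  · intro h
    by_contra hs
    exact (Nat.not_odd_iff_even.2 (doors_of_not_surj hs)) h
  · intro hs
    rw [doors_of_surj hs]
    exact odd_one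


lemma even_card_of_invol {α : Type*} [DecidableEq α] (s : Finset α) (f : α → α)
    (hmem : ∀ a ∈ s, f a ∈ s) (hinv : ∀ a ∈ s, f (f a) = a) (hne : ∀ a ∈ s, f a ≠ a) :
    Even s.card := by
  generalize hn : s.card = n
  induction n using Nat.strong_induction_on generalizing s with
  | _ n ih =>
    rcases s.eq_empty_or_nonempty with rfl | ⟨a, ha⟩
    · simp at hn; exact hn ▸ Even.zero
    · have hfa : f a ∈ s := hmem a ha
      have hfa' : f a ≠ a := hne a ha
      set t := (s.erase a).erase (f a) with ht
      have htsub : t ⊆ s := fun x hx => Finset.mem_of_mem_erase (Finset.mem_of_mem_erase hx)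
      have hmemt : ∀ x ∈ t, x ≠ a ∧ x ≠ f a ∧ x ∈ s := by
        intro x hx
        rw [ht] at hx
        exact ⟨Finset.ne_of_mem_erase (Finset.mem_of_mem_erase hx), Finset.ne_of_mem_erase hx,
          htsub hx⟩
      have hcard : t.card + 2 = s.card := by
        rw [ht, Finset.card_erase_of_mem, Finset.card_erase_of_mem ha]
        · have : 1 ≤ s.card := Finset.card_pos.2 ⟨a, ha⟩
          have h2 : 2 ≤ s.card := Finset.one_lt_card.2 ⟨a, ha, f a, hfa, fun h => hfa' h.symm⟩
          omega
        · exact Finset.mem_erase.2 ⟨hfa', hfa⟩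
      have hft : ∀ x ∈ t, f x ∈ t := by
        intro x hx
        obtain ⟨hxa, hxfa, hxs⟩ := hmemt x hx
        refine Finset.mem_erase.2 ⟨?_, Finset.mem_erase.2 ⟨?_, hmem x hxs⟩⟩
        · intro h; exact hxa (by rw [← hinv x hxs, h, hinv a ha])
        · intro h; exact hxfa (by rw [← hinv x hxs, h])
      obtain ⟨c, hc⟩ := ih (n - 2) (by omega) t hft (fun x hx => hinv x (htsub hx))
        (fun x hx => hne x (htsub hx)) (by omega)
      exact ⟨c + 1, by omega⟩

section Step
variable {M n : ℕ}

/-- move the base point up in direction `π 0`, rotate the permutation. -/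
def upF (hn : 0 < n) (s : Simp (M + 1) n) : Simp (M + 1) n :=
  (Function.update s.1 (s.2 0) ⟨((s.1 (s.2 0)).val + 1) % n, Nat.mod_lt _ hn⟩,
    (ext 1).trans s.2)

def downF (s : Simp (M + 1) n) : Simp (M + 1) n :=
  (Function.update s.1 (s.2 (Fin.last M))
      ⟨(s.1 (s.2 (Fin.last M))).val - 1, by have := (s.1 (s.2 (Fin.last M))).isLt; omega⟩,
    (ext 1).symm.trans s.2)

lemma update_val {N n : ℕ} (f : Fin N → Fin n) (a : Fin N) (v : Fin n) (i : Fin N) :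
    ((Function.update f a v i : Fin n) : ℕ) = if i = a then (v : ℕ) else ((f i : ℕ)) := by
  rw [Function.update_apply, apply_ite (Fin.val)]

lemma upF_fst_val (hn : 0 < n) (s : Simp (M + 1) n) (i : Fin (M + 1)) :
    (((upF hn s).1 i : Fin n) : ℕ)
      = if i = s.2 0 then ((s.1 (s.2 0) : ℕ) + 1) % n else (s.1 i : ℕ) := by
  unfold upF
  rw [update_val]

lemma downF_fst_val (s : Simp (M + 1) n) (i : Fin (M + 1)) :
    (((downF s).1 i : Fin n) : ℕ)
      = if i = s.2 (Fin.last M) then (s.1 (s.2 (Fin.last M)) : ℕ) - 1 else (s.1 i : ℕ) := by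
  unfold downF
  rw [update_val]

lemma upF_snd (hn : 0 < n) (s : Simp (M + 1) n) :
    (upF hn s).2 (Fin.last M) = s.2 0 := by simp [upF]

lemma downF_snd (s : Simp (M + 1) n) : (downF s).2 0 = s.2 (Fin.last M) := by simp [downF]

lemma vert_upF (hn : 0 < n) (s : Simp (M + 1) n) (h : (s.1 (s.2 0)).val + 1 < n)
    (j : Fin (M + 1)) : vert (upF hn s) j.castSucc = vert s j.succ := by
  funext i
  simp only [vert, upF, Equiv.symm_trans_apply, update_val]
  rcases Fin.eq_zero_or_eq_succ (s.2.symm i) with h0 | ⟨m', hm'⟩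
  · have hi : i = s.2 0 := by
      have := congrArg s.2 h0; simpa using this
    simp only [h0, ext_symm_zero, if_pos hi, Fin.val_last, Fin.coe_castSucc, Fin.val_succ,
      Fin.val_zero]
    rw [if_neg (by omega), if_pos (by omega), Nat.mod_eq_of_lt h, hi]
  · have hi : i ≠ s.2 0 := by
      intro hc
      have : s.2.symm i = 0 := by rw [hc]; simp
      rw [this] at hm'
      exact (Fin.succ_ne_zero m') hm'.symm
    simp only [hm', ext_symm_succ, if_neg hi, Equiv.Perm.one_def, Equiv.refl_symm,
      Equiv.refl_apply, Fin.coe_castSucc, Fin.val_succ]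
    congr 1
    split_ifs <;> omega

lemma upF_downF (hn : 0 < n) (s : Simp (M + 1) n) (h : 1 ≤ (s.1 (s.2 (Fin.last M))).val) :
    upF hn (downF s) = s := by
  obtain ⟨z, π⟩ := s
  have hlt := (z (π (Fin.last M))).isLt
  simp only [upF, downF] at h hlt ⊢
  have hσ : ((ext (1 : Equiv.Perm (Fin M))).symm.trans π) 0 = π (Fin.last M) := by simp
  ext1
  · funext i
    apply Fin.ext
    simp only [update_val, hσ]
    rcases eq_or_ne i (π (Fin.last M)) with rfl | hne
    · simp only [if_pos rfl, if_true, ite_true]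
      rw [Nat.mod_eq_of_lt (by omega)]
      omega
    · simp only [if_neg hne, if_false, ite_false]
  · show (ext 1).trans ((ext 1).symm.trans π) = π
    ext m
    simp

lemma downF_upF (hn : 0 < n) (s : Simp (M + 1) n) (h : (s.1 (s.2 0)).val + 1 < n) :
    downF (upF hn s) = s := by
  obtain ⟨z, π⟩ := s
  simp only [upF, downF] at h ⊢
  have hσ : ((ext (1 : Equiv.Perm (Fin M))).trans π) (Fin.last M) = π 0 := by simp
  ext1
  · funext i
    apply Fin.ext
    simp only [update_val, hσ]
    rcases eq_or_ne i (π 0) with rfl | hne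
    · simp only [if_pos rfl, if_true, ite_true]
      rw [Nat.mod_eq_of_lt (by omega)]
      omega
    · simp only [if_neg hne, if_false, ite_false]
  · show (ext 1).symm.trans ((ext 1).trans π) = π
    ext m
    simp

lemma vert_middle (s : Simp (M + 1) n) (a b : Fin (M + 1)) (hab : (a : ℕ) + 1 = b)
    (k' : Fin (M + 2)) (hk' : (k' : ℕ) ≠ (b : ℕ)) :
    vert (s.1, (Equiv.swap a b).trans s.2) k' = vert s k' := by
  funext i
  simp only [vert, Equiv.symm_trans_apply, Equiv.symm_swap]
  congr 1
  rcases eq_or_ne (s.2.symm i) a with hh | hh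
  · simp only [hh, Equiv.swap_apply_left]
    split_ifs <;> omega
  · rcases eq_or_ne (s.2.symm i) b with h2 | h2
    · simp only [h2, Equiv.swap_apply_right]
      split_ifs <;> omega
    · simp only [Equiv.swap_apply_of_ne_of_ne hh h2]


variable {ℓ : (Fin (M + 1) → ℕ) → Fin (M + 2)}

lemma isDoor_upF (hn : 0 < n) (s : Simp (M + 1) n) (h : (s.1 (s.2 0)).val + 1 < n)
    (hd : IsDoor ℓ s 0) : IsDoor ℓ (upF hn s) (Fin.last (M + 1)) := by
  intro j
  obtain ⟨k', hne, hk⟩ := hd j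
  obtain ⟨j'', rfl⟩ := Fin.exists_succ_eq.2 hne
  refine ⟨j''.castSucc, (Fin.castSucc_lt_last j'').ne, ?_⟩
  rw [vert_upF hn s h, hk]

lemma isDoor_downF (hn : 0 < n) (s : Simp (M + 1) n) (h : 1 ≤ (s.1 (s.2 (Fin.last M))).val)
    (hd : IsDoor ℓ s (Fin.last (M + 1))) : IsDoor ℓ (downF s) 0 := by
  have hb : ((downF s).1 ((downF s).2 0)).val + 1 < n := by
    have hlt := (s.1 (s.2 (Fin.last M))).isLt
    rw [downF_snd, downF_fst_val, if_pos rfl]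
    omega
  intro j
  obtain ⟨k', hne, hk⟩ := hd j
  obtain ⟨j'', rfl⟩ := Fin.exists_castSucc_eq.2 hne
  refine ⟨j''.succ, Fin.succ_ne_zero j'', ?_⟩
  have hv : vert (downF s) j''.succ = vert s j''.castSucc := by
    conv_rhs => rw [← upF_downF hn s h]
    rw [vert_upF hn (downF s) hb]
  rw [hv, hk]

lemma isDoor_middle (s : Simp (M + 1) n) (a b : Fin (M + 1)) (hab : (a : ℕ) + 1 = b)
    (k : Fin (M + 2)) (hk : (k : ℕ) = (b : ℕ)) (hd : IsDoor ℓ s k) :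
    IsDoor ℓ (s.1, (Equiv.swap a b).trans s.2) k := by
  intro j
  obtain ⟨k', hne, hk'⟩ := hd j
  refine ⟨k', hne, ?_⟩
  rw [vert_middle s a b hab k' (by rw [← hk]; exact fun h => hne (Fin.ext h)), hk']

lemma no_top_door
    (Hn : ∀ x : Fin (M + 1) → ℕ, (∀ i, x i ≤ n) → ∀ i, x i = n → ℓ x ≠ Fin.last (M + 1))
    (s : Simp (M + 1) n) (hd : IsDoor ℓ s 0) : (s.1 (s.2 0)).val + 1 < n := by
  by_contra hcon
  obtain ⟨k', hne, hk⟩ := hd (Fin.last M)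
  rw [Fin.succ_last] at hk
  have hlt := (s.1 (s.2 0)).isLt
  have hval : vert s k' (s.2 0) = n := by
    unfold vert
    have : (s.2.symm (s.2 0) : ℕ) = 0 := by simp
    rw [this, if_pos (by
      have : (k' : ℕ) ≠ 0 := fun h => hne (Fin.ext h)
      omega)]
    omega
  exact Hn (vert s k') (vert_le s k') (s.2 0) hval hk

/-- The pairing involution on doors. -/
def phi (hn : 0 < n) (p : Simp (M + 1) n × Fin (M + 2)) : Simp (M + 1) n × Fin (M + 2) :=
  if p.2 = 0 then (upF hn p.1, Fin.last (M + 1))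
  else if p.2 = Fin.last (M + 1) then (downF p.1, 0)
  else ((p.1.1, (Equiv.swap ⟨(p.2 : ℕ) - 1, by have := p.2.isLt; omega⟩
      ⟨(p.2 : ℕ) % (M + 1), Nat.mod_lt _ M.succ_pos⟩).trans p.1.2), p.2)


/-- inverse of `ext` for permutations sending `last` to `0`. -/
def unext (π : Equiv.Perm (Fin (M + 1))) (hπ : π (Fin.last M) = 0) : Equiv.Perm (Fin M) where
  toFun m := (π m.castSucc).pred
    (fun h => (Fin.castSucc_lt_last m).ne (π.injective (h.trans hπ.symm)))
  invFun i := (π.symm i.succ).castPred (fun h => (Fin.succ_ne_zero i) (by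
      have h2 := congrArg π h
      rw [Equiv.apply_symm_apply, hπ] at h2
      exact h2))
  left_inv m := by simp
  right_inv i := by simp

lemma ext_unext (π : Equiv.Perm (Fin (M + 1))) (hπ : π (Fin.last M) = 0) :
    ext (unext π hπ) = π := by
  apply Equiv.ext
  intro i
  induction i using Fin.lastCases with
  | last => rw [ext_last, hπ]
  | cast m => rw [ext_castSucc]; simp [unext]

lemma cast_parity (m : ℕ) : (m : ZMod 2) = if Odd m then 1 else 0 := by
  rcases Nat.even_or_odd m with he | ho
  · rw [if_neg (by simpa using Nat.not_odd_iff_even.2 he)]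
    obtain ⟨c, rfl⟩ := he
    push_cast
    rw [← two_mul, show ((2 : ZMod 2)) = 0 by decide, zero_mul]
  · rw [if_pos ho]
    obtain ⟨c, rfl⟩ := ho
    push_cast
    rw [show ((2 : ZMod 2)) = 0 by decide]
    ring

lemma odd_of_cast_one {m : ℕ} (h : (m : ZMod 2) = 1) : Odd m := by
  by_contra hc
  rw [cast_parity, if_neg hc] at h
  exact (by decide : (0 : ZMod 2) ≠ 1) h

end Step


open scoped Classical in
set_option maxHeartbeats 1000000 in
theorem kuhn_step {M n : ℕ} (hn : 0 < n)
    (ih : ∀ ℓ' : (Fin M → ℕ) → Fin (M + 1),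
      (∀ x : Fin M → ℕ, (∀ i, x i ≤ n) → ∀ i, x i = 0 → ℓ' x ≠ Fin.castSucc i) →
      (∀ x : Fin M → ℕ, (∀ i, x i ≤ n) → ∀ i, x i = n → ℓ' x ≠ Fin.last M) →
      Odd (univ.filter (fun s : Simp M n => IsComplete ℓ' s)).card)
    (ℓ : (Fin (M + 1) → ℕ) → Fin (M + 2))
    (H0 : ∀ x : Fin (M + 1) → ℕ, (∀ i, x i ≤ n) → ∀ i, x i = 0 → ℓ x ≠ Fin.castSucc i)
    (Hn : ∀ x : Fin (M + 1) → ℕ, (∀ i, x i ≤ n) → ∀ i, x i = n → ℓ x ≠ Fin.last (M + 1)) :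
    Odd (univ.filter (fun s : Simp (M + 1) n => IsComplete ℓ s)).card := by
  set cs : Finset (Simp (M + 1) n) := univ.filter (fun s => IsComplete ℓ s) with hcs
  set T : Finset (Simp (M + 1) n × Fin (M + 2)) :=
    univ.filter (fun p => IsDoor ℓ p.1 p.2) with hT
  set B : Finset (Simp (M + 1) n × Fin (M + 2)) :=
    T.filter (fun p => p.2 = Fin.last (M + 1) ∧ (p.1.1 (p.1.2 (Fin.last M)) : ℕ) = 0) with hB
  -- Part A : parity of T equals parity of cs
  have partA : (T.card : ZMod 2) = (cs.card : ZMod 2) := by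
    have h1 : T.card = ∑ s : Simp (M + 1) n, (univ.filter (fun k => IsDoor ℓ s k)).card := by
      rw [hT, Finset.card_filter, Fintype.sum_prod_type]
      exact Finset.sum_congr rfl fun s _ => (Finset.card_filter _ _).symm
    have h2 : ∀ s : Simp (M + 1) n,
        (((univ.filter (fun k => IsDoor ℓ s k)).card : ℕ) : ZMod 2)
          = if IsComplete ℓ s then 1 else 0 := by
      intro s
      rw [cast_parity]
      have hiff : Odd (univ.filter (fun k => IsDoor ℓ s k)).card ↔ IsComplete ℓ s :=
        odd_doors_iff (fun k => ℓ (vert s k))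
      simp only [hiff]
    calc (T.card : ZMod 2)
        = ∑ s : Simp (M + 1) n, (((univ.filter (fun k => IsDoor ℓ s k)).card : ℕ) : ZMod 2) := by
          rw [h1]; push_cast; rfl
      _ = ∑ s : Simp (M + 1) n, if IsComplete ℓ s then (1 : ZMod 2) else 0 :=
          Finset.sum_congr rfl fun s _ => h2 s
      _ = (cs.card : ZMod 2) := by
          rw [hcs, Finset.card_filter, Nat.cast_sum]
          exact (Finset.sum_congr rfl fun s _ => by split_ifs <;> simp).symm
  -- Part B : interior doors pair up
  have hlast0 : (Fin.last (M + 1)) ≠ (0 : Fin (M + 2)) := by simp [Fin.ext_iff]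
  have key : ∀ p ∈ T \ B, phi hn p ∈ T \ B ∧ phi hn (phi hn p) = p ∧ phi hn p ≠ p := by
    intro p hp
    have hpT : IsDoor ℓ p.1 p.2 := (Finset.mem_filter.1 (Finset.mem_sdiff.1 hp).1).2
    have hpB : ¬(p.2 = Fin.last (M + 1) ∧ (p.1.1 (p.1.2 (Fin.last M)) : ℕ) = 0) := by
      intro hc
      exact (Finset.mem_sdiff.1 hp).2
        (Finset.mem_filter.2 ⟨(Finset.mem_sdiff.1 hp).1, hc⟩)
    by_cases h0 : p.2 = 0
    · -- k = 0
      have hd : IsDoor ℓ p.1 0 := h0 ▸ hpT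
      have hb := no_top_door Hn p.1 hd
      have hphi : phi hn p = (upF hn p.1, Fin.last (M + 1)) := by
        rw [phi, if_pos h0]
      have hup1 : ((upF hn p.1).1 ((upF hn p.1).2 (Fin.last M)) : ℕ)
          = (p.1.1 (p.1.2 0) : ℕ) + 1 := by
        rw [upF_snd, upF_fst_val, if_pos rfl, Nat.mod_eq_of_lt hb]
      refine ⟨?_, ?_, ?_⟩
      · rw [hphi]
        refine Finset.mem_sdiff.2 ⟨Finset.mem_filter.2 ⟨Finset.mem_univ _, ?_⟩, ?_⟩
        · exact isDoor_upF hn p.1 hb hd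
        · intro hmem
          have := (Finset.mem_filter.1 hmem).2.2
          simp only at this
          omega
      · rw [hphi, phi, if_neg hlast0, if_pos rfl]
        have : downF (upF hn p.1) = p.1 := downF_upF hn p.1 hb
        rw [this, ← h0]
      · rw [hphi]
        intro hc
        exact hlast0 (by simpa using (congrArg Prod.snd hc).trans h0)
    · by_cases hl : p.2 = Fin.last (M + 1)
      · -- k = last
        have hd : IsDoor ℓ p.1 (Fin.last (M + 1)) := hl ▸ hpT
        have hz1 : 1 ≤ (p.1.1 (p.1.2 (Fin.last M)) : ℕ) := by
          rcases Nat.eq_zero_or_pos (p.1.1 (p.1.2 (Fin.last M)) : ℕ) with hz | hz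
          · exact absurd ⟨hl, hz⟩ hpB
          · exact hz
        have hphi : phi hn p = (downF p.1, 0) := by
          rw [phi, if_neg (by rw [hl]; exact hlast0), if_pos hl]
        refine ⟨?_, ?_, ?_⟩
        · rw [hphi]
          refine Finset.mem_sdiff.2 ⟨Finset.mem_filter.2 ⟨Finset.mem_univ _, ?_⟩, ?_⟩
          · exact isDoor_downF hn p.1 hz1 hd
          · intro hmem
            exact hlast0 ((Finset.mem_filter.1 hmem).2.1).symm
        · rw [hphi, phi, if_pos rfl]
          have : upF hn (downF p.1) = p.1 := upF_downF hn p.1 hz1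
          rw [this, ← hl]
        · rw [hphi]
          intro hc
          exact h0 (by rw [← congrArg Prod.snd hc])
      · -- middle
        have hk1 : 1 ≤ (p.2 : ℕ) := by
          have : (p.2 : ℕ) ≠ 0 := fun h => h0 (Fin.ext h)
          omega
        have hkM : (p.2 : ℕ) ≤ M := by
          have h1 : (p.2 : ℕ) ≠ M + 1 := fun h => hl (Fin.ext (by simp [h]))
          have := p.2.isLt
          omega
        have hbv : ((⟨(p.2 : ℕ) % (M + 1), Nat.mod_lt _ M.succ_pos⟩ : Fin (M + 1)) : ℕ)
            = (p.2 : ℕ) := Nat.mod_eq_of_lt (by omega)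
        have hphi : phi hn p = ((p.1.1, (Equiv.swap ⟨(p.2 : ℕ) - 1, by have := p.2.isLt; omega⟩
            ⟨(p.2 : ℕ) % (M + 1), Nat.mod_lt _ M.succ_pos⟩).trans p.1.2), p.2) := by
          unfold phi
          rw [if_neg h0, if_neg hl]
        have hab : ((⟨(p.2 : ℕ) - 1, by have := p.2.isLt; omega⟩ : Fin (M + 1)) : ℕ) + 1
            = ((⟨(p.2 : ℕ) % (M + 1), Nat.mod_lt _ M.succ_pos⟩ : Fin (M + 1)) : ℕ) := by
          show (p.2 : ℕ) - 1 + 1 = (p.2 : ℕ) % (M + 1)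
          rw [Nat.mod_eq_of_lt (by omega)]
          omega
        refine ⟨?_, ?_, ?_⟩
        · rw [hphi]
          refine Finset.mem_sdiff.2 ⟨Finset.mem_filter.2 ⟨Finset.mem_univ _, ?_⟩, ?_⟩
          · exact isDoor_middle p.1 _ _ hab p.2 hbv.symm hpT
          · intro hmem
            exact hl ((Finset.mem_filter.1 hmem).2.1)
        · rw [hphi]
          unfold phi
          rw [if_neg h0, if_neg hl]
          refine Prod.ext (Prod.ext rfl ?_) rfl
          show (Equiv.swap _ _).trans ((Equiv.swap _ _).trans p.1.2) = p.1.2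
          apply Equiv.ext
          intro m
          simp [Equiv.swap_apply_self]
        · rw [hphi]
          intro hc
          have h2 : (Equiv.swap (⟨(p.2 : ℕ) - 1, by have := p.2.isLt; omega⟩ : Fin (M + 1))
              ⟨(p.2 : ℕ) % (M + 1), Nat.mod_lt _ M.succ_pos⟩).trans p.1.2 = p.1.2 :=
            congrArg Prod.snd (congrArg Prod.fst hc)
          have h3 := congrArg (fun (e : Equiv.Perm (Fin (M + 1))) =>
            e (⟨(p.2 : ℕ) - 1, by have := p.2.isLt; omega⟩ : Fin (M + 1))) h2
          simp only [Equiv.trans_apply, Equiv.swap_apply_left] at h3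
          have h4 := p.1.2.injective h3
          have h5 : (p.2 : ℕ) % (M + 1) = (p.2 : ℕ) - 1 := congrArg Fin.val h4
          have hm : (p.2 : ℕ) % (M + 1) = (p.2 : ℕ) := Nat.mod_eq_of_lt (by omega)
          omega
  have hIeven : Even ((T \ B).card) :=
    even_card_of_invol (T \ B) (phi hn) (fun p hp => (key p hp).1)
      (fun p hp => (key p hp).2.1) (fun p hp => (key p hp).2.2)
  -- Part C : boundary doors are the M-dimensional complete simplices
  set ℓ' : (Fin M → ℕ) → Fin (M + 1) := fun x =>
    if h : ℓ (Fin.cases 0 x) = 0 then Fin.last M else (ℓ (Fin.cases 0 x)).pred h with hℓ'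
  have hcase_bound : ∀ x : Fin M → ℕ, (∀ i', x i' ≤ n) → ∀ i : Fin (M + 1),
      (Fin.cases 0 x : ∀ _ : Fin (M + 1), ℕ) i ≤ n := by
    intro x hx i
    induction i using Fin.cases with
    | zero => simp
    | succ i' => simpa using hx i'
  have hℓ'succ : ∀ x : Fin M → ℕ, (∀ i', x i' ≤ n) → (ℓ' x).succ = ℓ (Fin.cases 0 x) := by
    intro x hx
    have hne : ℓ (Fin.cases 0 x) ≠ 0 := by
      have := H0 (Fin.cases 0 x) (hcase_bound x hx) 0 (by simp)
      simpa using this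
    rw [hℓ']
    simp only
    rw [dif_neg hne, Fin.succ_pred]
  have H0' : ∀ x : Fin M → ℕ, (∀ i', x i' ≤ n) → ∀ i', x i' = 0 → ℓ' x ≠ Fin.castSucc i' := by
    intro x hx i' hxi' hcon
    have hval : ℓ (Fin.cases 0 x) = Fin.castSucc i'.succ := by
      rw [← hℓ'succ x hx, hcon, Fin.succ_castSucc]
    exact H0 (Fin.cases 0 x) (hcase_bound x hx) i'.succ (by simpa using hxi') hval
  have Hn' : ∀ x : Fin M → ℕ, (∀ i', x i' ≤ n) → ∀ i', x i' = n → ℓ' x ≠ Fin.last M := by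
    intro x hx i' hxi' hcon
    have hval : ℓ (Fin.cases 0 x) = Fin.last (M + 1) := by
      rw [← hℓ'succ x hx, hcon, Fin.succ_last]
    exact Hn (Fin.cases 0 x) (hcase_bound x hx) i'.succ (by simpa using hxi') hval
  have hodd' := ih ℓ' H0' Hn'
  have vert_lift : ∀ (s' : Simp M n) (k' : Fin (M + 1)),
      vert ((Fin.cases ⟨0, hn⟩ s'.1 : Fin (M + 1) → Fin n), ext s'.2) k'.castSucc
        = Fin.cases 0 (vert s' k') := by
    intro s' k'
    funext i
    induction i using Fin.cases with
    | zero =>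
      show ((Fin.cases ⟨0, hn⟩ s'.1 : ∀ _ : Fin (M + 1), Fin n) 0 : ℕ)
          + (if (((ext s'.2).symm 0 : Fin (M + 1)) : ℕ) < ((k'.castSucc : Fin (M + 2)) : ℕ)
              then 1 else 0) = 0
      rw [ext_symm_zero]
      have hk' := k'.isLt
      simp only [Fin.cases_zero, Fin.val_last, Fin.coe_castSucc]
      rw [if_neg (by omega)]
    | succ i' =>
      show ((Fin.cases ⟨0, hn⟩ s'.1 : ∀ _ : Fin (M + 1), Fin n) i'.succ : ℕ)
          + (if (((ext s'.2).symm i'.succ : Fin (M + 1)) : ℕ) < ((k'.castSucc : Fin (M + 2)) : ℕ)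
              then 1 else 0) = vert s' k' i'
      rw [ext_symm_succ]
      simp only [Fin.cases_succ, Fin.coe_castSucc]
      rfl
  set F : Simp M n → Simp (M + 1) n × Fin (M + 2) :=
    fun s' => ((Fin.cases ⟨0, hn⟩ s'.1, ext s'.2), Fin.last (M + 1)) with hF
  have hlabel : ∀ (s' : Simp M n) (k' : Fin (M + 1)),
      ℓ (vert (F s').1 k'.castSucc) = (ℓ' (vert s' k')).succ := by
    intro s' k'
    have h1 : vert (F s').1 k'.castSucc = Fin.cases 0 (vert s' k') := vert_lift s' k'
    rw [h1, ← hℓ'succ _ (fun i' => vert_le s' k' i')]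
  have hdoorF : ∀ s' : Simp M n, IsDoor ℓ (F s').1 (Fin.last (M + 1)) ↔ IsComplete ℓ' s' := by
    intro s'
    constructor
    · intro hd m
      obtain ⟨k', hne, hk⟩ := hd m
      obtain ⟨k'', rfl⟩ := Fin.exists_castSucc_eq.2 hne
      exact ⟨k'', Fin.succ_injective _ (by rw [← hlabel s' k'', hk])⟩
    · intro hc j
      obtain ⟨k'', hk⟩ := hc j
      exact ⟨k''.castSucc, (Fin.castSucc_lt_last _).ne, by rw [hlabel, hk]⟩
  have hcardB : (univ.filter (fun s' : Simp M n => IsComplete ℓ' s')).card = B.card := by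
    apply Finset.card_bij (fun s' _ => F s')
    · intro s' hs'
      have hcomp : IsComplete ℓ' s' := (Finset.mem_filter.1 hs').2
      refine Finset.mem_filter.2 ⟨Finset.mem_filter.2 ⟨Finset.mem_univ _, ?_⟩, rfl, ?_⟩
      · exact (hdoorF s').2 hcomp
      · show (((F s').1.1 ((F s').1.2 (Fin.last M)) : Fin n) : ℕ) = 0
        have h1 : (F s').1.2 (Fin.last M) = 0 := ext_last s'.2
        rw [h1]
        rfl
    · intro s₁ h₁ s₂ h₂ heq
      have e1 : (Fin.cases ⟨0, hn⟩ s₁.1 : Fin (M + 1) → Fin n) = Fin.cases ⟨0, hn⟩ s₂.1 :=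
        congrArg Prod.fst (congrArg Prod.fst heq)
      have e2 : ext s₁.2 = ext s₂.2 := congrArg Prod.snd (congrArg Prod.fst heq)
      ext1
      · funext i'
        have := congrFun e1 i'.succ
        simpa using this
      · apply Equiv.ext
        intro m
        have := congrArg (fun e : Equiv.Perm (Fin (M + 1)) => e m.castSucc) e2
        simp only [ext_castSucc] at this
        exact Fin.succ_injective _ this
    · intro p hp
      have hpmem := Finset.mem_filter.1 hp
      have hpT : IsDoor ℓ p.1 p.2 := (Finset.mem_filter.1 hpmem.1).2
      have hp2 : p.2 = Fin.last (M + 1) := hpmem.2.1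
      have hz0 : (p.1.1 (p.1.2 (Fin.last M)) : ℕ) = 0 := hpmem.2.2
      have hπlast : p.1.2 (Fin.last M) = 0 := by
        by_contra hcon
        obtain ⟨j₁, hj₁⟩ := Fin.exists_succ_eq.2 hcon
        have hd : IsDoor ℓ p.1 (Fin.last (M + 1)) := hp2 ▸ hpT
        obtain ⟨k', hne, hk⟩ := hd j₁.castSucc
        have hvi : vert p.1 k' (p.1.2 (Fin.last M)) = 0 := by
          unfold vert
          have hsymm : (p.1.2.symm (p.1.2 (Fin.last M)) : ℕ) = M := by simp
          rw [hsymm, if_neg (by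
            have h1 : (k' : ℕ) ≠ M + 1 := fun h => hne (Fin.ext (by simpa using h))
            have := k'.isLt
            omega)]
          simpa using hz0
        have hlab : ℓ (vert p.1 k') = Fin.castSucc (p.1.2 (Fin.last M)) := by
          rw [hk, ← hj₁, ← Fin.succ_castSucc]
        exact H0 (vert p.1 k') (vert_le _ _) (p.1.2 (Fin.last M)) hvi hlab
      refine ⟨(fun i' => p.1.1 i'.succ, unext p.1.2 hπlast), ?_, ?_⟩
      · -- membership : the candidate is complete
        refine Finset.mem_filter.2 ⟨Finset.mem_univ _, ?_⟩
        apply (hdoorF _).1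
        have hFp1 : (F (fun i' => p.1.1 i'.succ, unext p.1.2 hπlast)).1 = p.1 := by
          ext1
          · funext i
            induction i using Fin.cases with
            | zero =>
              show (⟨0, hn⟩ : Fin n) = p.1.1 0
              have h7 : p.1.1 (p.1.2 (Fin.last M)) = p.1.1 0 := congrArg p.1.1 hπlast
              apply Fin.ext
              show (0 : ℕ) = (p.1.1 0 : ℕ)
              rw [← h7, hz0]
            | succ i' => simp [hF]
          · exact ext_unext p.1.2 hπlast
        rw [hFp1]
        exact hp2 ▸ hpT
      · -- F applied to the candidate gives back p
        have hFp1 : (F (fun i' => p.1.1 i'.succ, unext p.1.2 hπlast)).1 = p.1 := by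
          ext1
          · funext i
            induction i using Fin.cases with
            | zero =>
              show (⟨0, hn⟩ : Fin n) = p.1.1 0
              have h7 : p.1.1 (p.1.2 (Fin.last M)) = p.1.1 0 := congrArg p.1.1 hπlast
              apply Fin.ext
              show (0 : ℕ) = (p.1.1 0 : ℕ)
              rw [← h7, hz0]
            | succ i' => simp [hF]
          · exact ext_unext p.1.2 hπlast
        exact Prod.ext hFp1 hp2.symm
  -- Conclusion
  have hsplit : (T \ B).card + B.card = T.card :=
    Finset.card_sdiff_add_card_eq_card (Finset.filter_subset _ _)
  have hBodd : Odd B.card := hcardB ▸ hodd'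
  apply odd_of_cast_one
  have h9 : (cs.card : ZMod 2) = ((T \ B).card + B.card : ℕ) := by
    rw [hsplit]
    exact partA.symm
  rw [h9, Nat.cast_add, cast_parity ((T \ B).card), cast_parity B.card,
    if_neg (Nat.not_odd_iff_even.2 hIeven), if_pos hBodd, zero_add]

lemma vert_diff {N n : ℕ} (s : Simp N n) (k k' : Fin (N + 1)) (i : Fin N) :
    vert s k i ≤ vert s k' i + 1 ∧ vert s k' i ≤ vert s k i + 1 := by
  unfold vert
  split_ifs <;> omega


open scoped Classical in
theorem kuhn : ∀ (N n : ℕ), 0 < n → ∀ ℓ : (Fin N → ℕ) → Fin (N + 1),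
    (∀ x : Fin N → ℕ, (∀ i, x i ≤ n) → ∀ i, x i = 0 → ℓ x ≠ Fin.castSucc i) →
    (∀ x : Fin N → ℕ, (∀ i, x i ≤ n) → ∀ i, x i = n → ℓ x ≠ Fin.last N) →
    Odd (univ.filter (fun s : Simp N n => IsComplete ℓ s)).card := by
  intro N
  induction N with
  | zero =>
    intro n hn ℓ H0 Hn
    have hall : ∀ s : Simp 0 n, IsComplete ℓ s := fun s m => ⟨0, by
      have h2 : ∀ a b : Fin 1, a = b := by decide
      exact h2 _ _⟩
    rw [Finset.filter_true_of_mem (fun s _ => hall s), Finset.card_univ]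
    have h1 : Fintype.card (Simp 0 n) = 1 := by
      rw [Fintype.card_prod]
      simp
    rw [h1]
    exact odd_one
  | succ M ih =>
    intro n hn ℓ H0 Hn
    exact kuhn_step hn (fun ℓ' h0 h1 => ih n hn ℓ' h0 h1) ℓ H0 Hn


open scoped Classical in
set_option maxHeartbeats 1000000 in
theorem poincare_miranda_aux (N : ℕ) (hN : 1 ≤ N)
    (f : Fin N → (Fin N → ℝ) → ℝ)
    (hf : ∀ i, ContinuousOn (f i) (Set.Icc (fun _ => (-1 : ℝ)) (fun _ => (1 : ℝ))))
    (hplus : ∀ i, ∀ x ∈ Set.Icc (fun _ => (-1 : ℝ)) (fun _ => (1 : ℝ)),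
      x i = 1 → 0 ≤ f i x)
    (hminus : ∀ i, ∀ x ∈ Set.Icc (fun _ => (-1 : ℝ)) (fun _ => (1 : ℝ)),
      x i = -1 → f i x ≤ 0) :
    ∃ x ∈ Set.Icc (fun _ => (-1 : ℝ)) (fun _ => (1 : ℝ)), ∀ i, f i x = 0 := by
  by_contra hcon
  push_neg at hcon
  set C : Set (Fin N → ℝ) := Set.Icc (fun _ => (-1 : ℝ)) (fun _ => (1 : ℝ)) with hC
  have hCcomp : IsCompact C := isCompact_Icc
  have hCne : C.Nonempty := ⟨fun _ => -1, Set.mem_Icc.2 ⟨le_refl _, fun i => by norm_num⟩⟩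
  have hsumcont : ContinuousOn (fun x => ∑ i : Fin N, |f i x|) C := by
    apply continuousOn_finset_sum
    intro i _
    exact (hf i).abs
  obtain ⟨x₀, hx₀C, hx₀min⟩ := hCcomp.exists_isMinOn hCne hsumcont
  set δ := ∑ i : Fin N, |f i x₀| with hδ
  have hδpos : 0 < δ := by
    obtain ⟨i, hi⟩ := hcon x₀ hx₀C
    have h1 : 0 < |f i x₀| := abs_pos.2 hi
    have h2 : |f i x₀| ≤ δ := Finset.single_le_sum (f := fun j => |f j x₀|)
      (fun j _ => abs_nonneg _) (mem_univ i)
    linarith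
  have hNR : (0 : ℝ) < (N : ℝ) := by
    have : (0 : ℕ) < N := by omega
    exact_mod_cast this
  set c := δ / (2 * N) with hc
  have hcpos : 0 < c := by rw [hc]; positivity
  set ε := δ / (4 * N) with hε
  have hεpos : 0 < ε := by rw [hε]; positivity
  set g : Fin N → (Fin N → ℝ) → ℝ := fun i x => f i x + c * x i with hg
  have hgc : ∀ i, ContinuousOn (g i) C := fun i =>
    (hf i).add ((continuous_const.mul (continuous_apply i)).continuousOn)
  have huc : ∀ i, UniformContinuousOn (g i) C := fun i =>
    hCcomp.uniformContinuousOn_of_continuous (hgc i)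
  choose η hηpos hη using fun i => Metric.uniformContinuousOn_iff.1 (huc i) ε hεpos
  have hfinNne : Nonempty (Fin N) := ⟨⟨0, by omega⟩⟩
  set ηm := Finset.univ.inf' Finset.univ_nonempty η with hηm
  have hηmpos : 0 < ηm := by
    rw [hηm, Finset.lt_inf'_iff]
    exact fun i _ => hηpos i
  obtain ⟨n, hn2⟩ := exists_nat_gt (2 / ηm)
  have hnpos : 0 < n := by
    by_contra h
    have hn0 : n = 0 := by omega
    rw [hn0] at hn2
    have : (0 : ℝ) < 2 / ηm := by positivity
    norm_num at hn2
    linarith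
  have hnR : (0 : ℝ) < (n : ℝ) := by exact_mod_cast hnpos
  have hmesh : 2 / (n : ℝ) < ηm := by
    rw [div_lt_iff₀ hnR]
    have h3 : 2 < (n : ℝ) * ηm := by
      have := (div_lt_iff₀ hηmpos).1 hn2
      linarith
    linarith
  set p : (Fin N → ℕ) → (Fin N → ℝ) := fun x i => -1 + 2 * (x i : ℝ) / n with hp
  have hpC : ∀ x : Fin N → ℕ, (∀ i, x i ≤ n) → p x ∈ C := by
    intro x hx
    refine Set.mem_Icc.2 ⟨fun i => ?_, fun i => ?_⟩
    · show (-1 : ℝ) ≤ -1 + 2 * (x i : ℝ) / n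
      have h2 : (0 : ℝ) ≤ 2 * (x i : ℝ) / n := by positivity
      linarith
    · show -1 + 2 * (x i : ℝ) / n ≤ 1
      have h2 : (x i : ℝ) ≤ n := by exact_mod_cast hx i
      have h3 : 2 * (x i : ℝ) / n ≤ 2 := by
        rw [div_le_iff₀ hnR]
        linarith
      linarith
  set ℓ : (Fin N → ℕ) → Fin (N + 1) := fun x =>
    if h : ∃ i, 0 < g i (p x) then Fin.castSucc h.choose else Fin.last N with hℓ
  have hℓpos : ∀ x i, ℓ x = Fin.castSucc i → 0 < g i (p x) := by
    intro x i hx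
    rw [hℓ] at hx
    simp only at hx
    by_cases h : ∃ j, 0 < g j (p x)
    · rw [dif_pos h] at hx
      have h2 : h.choose = i := Fin.castSucc_injective _ hx
      exact h2 ▸ h.choose_spec
    · rw [dif_neg h] at hx
      exact absurd hx.symm (Fin.castSucc_lt_last i).ne
  have hℓlast : ∀ x, ℓ x = Fin.last N → ∀ i, g i (p x) ≤ 0 := by
    intro x hx i
    by_cases h : ∃ j, 0 < g j (p x)
    · rw [hℓ] at hx
      simp only at hx
      rw [dif_pos h] at hx
      exact absurd hx (Fin.castSucc_lt_last _).ne
    · push_neg at h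
      exact h i
  have H0 : ∀ x : Fin N → ℕ, (∀ i, x i ≤ n) → ∀ i, x i = 0 → ℓ x ≠ Fin.castSucc i := by
    intro x hx i hxi hcon2
    have hgi := hℓpos x i hcon2
    have hpxi : p x i = -1 := by
      show -1 + 2 * (x i : ℝ) / n = -1
      rw [hxi]
      simp
    have hfC := hminus i (p x) (hpC x hx) hpxi
    have he : g i (p x) = f i (p x) + c * (p x i) := rfl
    rw [he, hpxi] at hgi
    linarith
  have Hn : ∀ x : Fin N → ℕ, (∀ i, x i ≤ n) → ∀ i, x i = n → ℓ x ≠ Fin.last N := by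
    intro x hx i hxi hcon2
    have hpxi : p x i = 1 := by
      show -1 + 2 * (x i : ℝ) / n = 1
      rw [hxi]
      field_simp
      norm_num
    have hfC := hplus i (p x) (hpC x hx) hpxi
    have hgi := hℓlast x hcon2 i
    have he : g i (p x) = f i (p x) + c * (p x i) := rfl
    rw [he, hpxi] at hgi
    linarith
  have main := kuhn N n hnpos ℓ H0 Hn
  have hpos : 0 < (univ.filter (fun s : Simp N n => IsComplete ℓ s)).card := by
    rcases main with ⟨t, ht⟩
    omega
  obtain ⟨s, hs⟩ := Finset.card_pos.1 hpos
  have hcomp : IsComplete ℓ s := (Finset.mem_filter.1 hs).2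
  obtain ⟨k₀, hk₀⟩ := hcomp (Fin.last N)
  set y := p (vert s k₀) with hy
  have hyC : y ∈ C := hpC _ (vert_le s k₀)
  have hgy : ∀ i, g i y ≤ 0 := hℓlast _ hk₀
  have hgylb : ∀ i, -ε < g i y := by
    intro i
    obtain ⟨kᵢ, hkᵢ⟩ := hcomp (Fin.castSucc i)
    have hgpos := hℓpos _ i hkᵢ
    have hdist : dist y (p (vert s kᵢ)) < η i := by
      have hle : dist y (p (vert s kᵢ)) ≤ 2 / n := by
        refine (dist_pi_le_iff (by positivity)).2 fun j => ?_
        rw [Real.dist_eq]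
        have hd := vert_diff s k₀ kᵢ j
        have h1 : ((vert s k₀ j : ℕ) : ℝ) ≤ ((vert s kᵢ j : ℕ) : ℝ) + 1 := by
          exact_mod_cast hd.1
        have h2 : ((vert s kᵢ j : ℕ) : ℝ) ≤ ((vert s k₀ j : ℕ) : ℝ) + 1 := by
          exact_mod_cast hd.2
        show |(-1 + 2 * ((vert s k₀ j : ℕ) : ℝ) / n) - (-1 + 2 * ((vert s kᵢ j : ℕ) : ℝ) / n)|
          ≤ 2 / n
        have he : (-1 + 2 * ((vert s k₀ j : ℕ) : ℝ) / n) - (-1 + 2 * ((vert s kᵢ j : ℕ) : ℝ) / n)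
            = 2 * (((vert s k₀ j : ℕ) : ℝ) - ((vert s kᵢ j : ℕ) : ℝ)) / n := by
          ring
        rw [he, abs_div, abs_of_pos hnR, div_le_div_iff₀ hnR hnR]
        have h3 : |2 * (((vert s k₀ j : ℕ) : ℝ) - ((vert s kᵢ j : ℕ) : ℝ))| ≤ 2 := by
          rw [abs_mul, abs_two]
          have h4 : |((vert s k₀ j : ℕ) : ℝ) - ((vert s kᵢ j : ℕ) : ℝ)| ≤ 1 :=
            abs_le.2 ⟨by linarith, by linarith⟩
          linarith
        nlinarith
      have h5 : ηm ≤ η i := Finset.inf'_le _ (mem_univ i)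
      linarith
    have h6 := hη i y hyC (p (vert s kᵢ)) (hpC _ (vert_le s kᵢ)) hdist
    rw [Real.dist_eq] at h6
    have h7 := abs_lt.1 h6
    linarith [h7.1]
  have hfy : ∀ i, |f i y| ≤ ε + c := by
    intro i
    have h1 : f i y = g i y - c * y i := by
      show f i y = (f i y + c * y i) - c * y i
      ring
    have hyb1 : -1 ≤ y i := (Set.mem_Icc.1 hyC).1 i
    have hyb2 : y i ≤ 1 := (Set.mem_Icc.1 hyC).2 i
    have hgabs : |g i y| ≤ ε := abs_le.2 ⟨by linarith [hgylb i], by linarith [hgy i]⟩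
    have hcy : |c * y i| ≤ c := by
      rw [abs_mul, abs_of_pos hcpos]
      have : |y i| ≤ 1 := abs_le.2 ⟨hyb1, hyb2⟩
      nlinarith
    calc |f i y| = |g i y - c * y i| := by rw [h1]
      _ ≤ |g i y| + |c * y i| := abs_sub _ _
      _ ≤ ε + c := by linarith
  have hsum : δ ≤ ∑ i : Fin N, |f i y| := isMinOn_iff.1 hx₀min y hyC
  have hsum2 : ∑ i : Fin N, |f i y| ≤ N * (ε + c) := by
    calc ∑ i : Fin N, |f i y| ≤ ∑ _i : Fin N, (ε + c) := Finset.sum_le_sum (fun i _ => hfy i)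
      _ = N * (ε + c) := by
          rw [Finset.sum_const, Finset.card_univ, Fintype.card_fin, nsmul_eq_mul]
  have hfinal : (N : ℝ) * (ε + c) < δ := by
    rw [hε, hc]
    have h8 : (N : ℝ) * (δ / (4 * N) + δ / (2 * N)) = 3 * δ / 4 := by
      field_simp
      ring
    rw [h8]
    linarith
  linarith

end PM


/-- **Poincaré–Miranda theorem.** Let `J^N = [-1,1]^N` be the `N`-dimensional cube, and let
`f 1, …, f N` be continuous real-valued functions on `J^N` such that for each `i`,
`f i x ≥ 0` on the face `{x ∈ J^N : x i = 1}` and `f i x ≤ 0` on the face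
`{x ∈ J^N : x i = -1}`. Then there is a point `x̂ ∈ J^N` with `f i x̂ = 0` for every `i`. -/
theorem poincare_miranda (N : ℕ) (hN : 1 ≤ N)
    (f : Fin N → (Fin N → ℝ) → ℝ)
    (hf : ∀ i, ContinuousOn (f i) (Set.Icc (fun _ => (-1 : ℝ)) (fun _ => (1 : ℝ))))
    (hplus : ∀ i, ∀ x ∈ Set.Icc (fun _ => (-1 : ℝ)) (fun _ => (1 : ℝ)),
      x i = 1 → 0 ≤ f i x)
    (hminus : ∀ i, ∀ x ∈ Set.Icc (fun _ => (-1 : ℝ)) (fun _ => (1 : ℝ)),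
      x i = -1 → f i x ≤ 0) :
    ∃ x ∈ Set.Icc (fun _ => (-1 : ℝ)) (fun _ => (1 : ℝ)), ∀ i, f i x = 0 :=
  PM.poincare_miranda_aux N hN f hf hplus hminus
end

section
/- Let X be a finite nonempty type, M a finite index set, and φ_m : X → ℝ feature functions for m ∈ M. For θ ∈ ℝ^M define the Gibbs distribution π_θ(x) = exp(−Σ_m θ_m φ_m(x)) / Z_θ, where Z_θ = Σ_x exp(−Σ_m θ_m φ_m(x)), and define η_m(θ) = Σ_x π_θ(x) φ_m(x). Then for every μ ∈ ℝ^M and every choice of Λ_m > 0 (m ∈ M), there exists θ ∈ ℝ^M such that θ_m = Λ_m(η_m(θ) − μ_m) for every m ∈ M. -/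
/-! The fixed points are the critical points of the potential
`θ ↦ ∑ m, (θ m ^ 2 / (2 * Λ m) + μ m * θ m) + log Z θ`, whose gradient is
`θ / Λ + μ - η θ` because `∇ log Z = -η`. The potential is continuous and coercive, since
`log Z θ ≥ -energy φ θ x` for any state `x` grows at most linearly in `θ` against the quadratic
term; so it attains a global minimum, where its gradient vanishes. -/

open Finset Real Filter

theorem tendsto_cocompact_atTop_of_sq_norm_le {E : Type*} [NormedAddCommGroup E] [ProperSpace E]
    {f : E → ℝ} {a b : ℝ} (ha : 0 < a) (hf : ∀ x, a * ‖x‖ ^ 2 - b * ‖x‖ ≤ f x) :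
    Tendsto f (cocompact E) atTop := by
  have hquad : Tendsto (fun r : ℝ => a * r ^ 2 - b * r) atTop atTop := by
    have h := tendsto_id.atTop_mul_atTop₀
      (tendsto_atTop_add_const_right _ (-b) (tendsto_id.const_mul_atTop ha))
    exact h.congr fun r => by simp only [id]; ring
  exact tendsto_atTop_mono hf (hquad.comp tendsto_norm_cocompact_atTop)

theorem sq_norm_le_sum_sq {ι : Type*} [Fintype ι] (x : ι → ℝ) : ‖x‖ ^ 2 ≤ ∑ i, x i ^ 2 := by
  have hsum : 0 ≤ ∑ i, x i ^ 2 := sum_nonneg fun _ _ => sq_nonneg _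
  have hnorm : ‖x‖ ≤ √(∑ i, x i ^ 2) :=
    (pi_norm_le_iff_of_nonneg (sqrt_nonneg _)).2 fun i => abs_le_sqrt <|
      single_le_sum (f := fun i => x i ^ 2) (fun _ _ => sq_nonneg _) (mem_univ i)
  calc ‖x‖ ^ 2 ≤ √(∑ i, x i ^ 2) ^ 2 := pow_le_pow_left₀ (norm_nonneg x) hnorm 2
    _ = ∑ i, x i ^ 2 := sq_sqrt hsum

theorem abs_sum_mul_le {ι : Type*} [Fintype ι] (x c : ι → ℝ) :
    |∑ i, x i * c i| ≤ (∑ i, |c i|) * ‖x‖ :=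
  calc |∑ i, x i * c i| ≤ ∑ i, |x i| * |c i| := by
        simpa only [abs_mul] using abs_sum_le_sum_abs (fun i => x i * c i) univ
    _ ≤ ∑ i, ‖x‖ * |c i| := by
        refine sum_le_sum fun i _ => mul_le_mul_of_nonneg_right ?_ (abs_nonneg _)
        exact (Real.norm_eq_abs (x i)).symm.trans_le (norm_le_pi_norm x i)
    _ = (∑ i, |c i|) * ‖x‖ := by rw [← mul_sum, mul_comm]

noncomputable section

namespace GibbsFamily

variable {X M : Type*} [Fintype X] [Fintype M]

def energy (φ : M → X → ℝ) (θ : M → ℝ) (x : X) : ℝ := ∑ m, θ m * φ m x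

def partitionFunction (φ : M → X → ℝ) (θ : M → ℝ) : ℝ := ∑ x, exp (-energy φ θ x)

def featureMean (φ : M → X → ℝ) (θ : M → ℝ) (m : M) : ℝ :=
  ∑ x, exp (-energy φ θ x) / partitionFunction φ θ * φ m x

def potential (φ : M → X → ℝ) (Λ μ : M → ℝ) (θ : M → ℝ) : ℝ :=
  ∑ m, (θ m ^ 2 / (2 * Λ m) + μ m * θ m) + log (partitionFunction φ θ)

local notation "pr_" m => ContinuousLinearMap.proj (R := ℝ) (φ := fun _ : M => ℝ) m

theorem partitionFunction_pos [Nonempty X] (φ : M → X → ℝ) (θ : M → ℝ) :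
    0 < partitionFunction φ θ :=
  sum_pos (fun _ _ => exp_pos _) univ_nonempty

theorem neg_energy_le_log_partitionFunction [Nonempty X] (φ : M → X → ℝ) (θ : M → ℝ) (x : X) :
    -energy φ θ x ≤ log (partitionFunction φ θ) :=
  (le_log_iff_exp_le (partitionFunction_pos φ θ)).2 <|
    single_le_sum (f := fun x => exp (-energy φ θ x)) (fun _ _ => (exp_pos _).le) (mem_univ x)

omit [Fintype X] in
theorem hasFDerivAt_energy (φ : M → X → ℝ) (θ : M → ℝ) (x : X) :
    HasFDerivAt (energy φ · x) (∑ m, φ m x • pr_ m) θ := by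
  have h := HasFDerivAt.fun_sum (u := univ) fun m _ =>
    (hasFDerivAt_apply (𝕜 := ℝ) m θ).mul_const (φ m x)
  simpa [energy, mul_comm] using h

theorem hasFDerivAt_partitionFunction (φ : M → X → ℝ) (θ : M → ℝ) :
    HasFDerivAt (partitionFunction φ)
      (-∑ x, exp (-energy φ θ x) • ∑ m, φ m x • pr_ m) θ := by
  have h := HasFDerivAt.fun_sum (u := univ) fun x _ => (hasFDerivAt_energy φ θ x).neg.exp
  simp only [smul_neg, sum_neg_distrib] at h
  exact h

theorem hasFDerivAt_log_partitionFunction [Nonempty X] (φ : M → X → ℝ) (θ : M → ℝ) :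
    HasFDerivAt (fun θ => log (partitionFunction φ θ)) (-∑ m, featureMean φ θ m • pr_ m) θ := by
  refine ((hasFDerivAt_partitionFunction φ θ).log
    (partitionFunction_pos φ θ).ne').congr_fderiv ?_
  ext v
  simp only [smul_apply, neg_apply, _root_.sum_apply, ContinuousLinearMap.proj_apply,
    smul_eq_mul, featureMean, sum_mul, mul_sum, mul_neg, neg_inj]
  rw [sum_comm]
  exact sum_congr rfl fun _ _ => sum_congr rfl fun _ _ => by ring

theorem hasFDerivAt_potential [Nonempty X] (φ : M → X → ℝ) {Λ : M → ℝ} (hΛ : ∀ m, Λ m ≠ 0)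
    (μ θ : M → ℝ) :
    HasFDerivAt (potential φ Λ μ) (∑ m, (θ m / Λ m + μ m - featureMean φ θ m) • pr_ m) θ := by
  have hquad := HasFDerivAt.fun_sum (u := univ) fun m _ =>
    (((hasFDerivAt_apply (𝕜 := ℝ) m θ).pow 2).mul_const (2 * Λ m)⁻¹).add
      ((hasFDerivAt_apply (𝕜 := ℝ) m θ).const_mul (μ m))
  simp only [← div_eq_mul_inv] at hquad
  refine (hquad.add (hasFDerivAt_log_partitionFunction φ θ)).congr_fderiv ?_
  ext v
  simp only [add_apply, smul_apply, neg_apply, _root_.sum_apply, ContinuousLinearMap.proj_apply,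
    smul_eq_mul, nsmul_eq_mul]
  rw [← sub_eq_add_neg, ← sum_sub_distrib]
  refine sum_congr rfl fun m _ => ?_
  field_simp [hΛ m]
  ring

theorem continuous_potential [Nonempty X] (φ : M → X → ℝ) {Λ : M → ℝ} (hΛ : ∀ m, Λ m ≠ 0)
    (μ : M → ℝ) : Continuous (potential φ Λ μ) :=
  continuous_iff_continuousAt.2 fun θ => (hasFDerivAt_potential φ hΛ μ θ).continuousAt

theorem eq_mul_featureMean_sub_of_isMinimum [Nonempty X] (φ : M → X → ℝ) {Λ : M → ℝ}
    (hΛ : ∀ m, Λ m ≠ 0) (μ : M → ℝ) {θ : M → ℝ}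
    (hθ : ∀ θ', potential φ Λ μ θ ≤ potential φ Λ μ θ') (m : M) :
    θ m = Λ m * (featureMean φ θ m - μ m) := by
  classical
  have hmin : IsLocalMin (potential φ Λ μ) θ := Eventually.of_forall hθ
  have hcrit := hmin.hasFDerivAt_eq_zero (hasFDerivAt_potential φ hΛ μ θ)
  have hm := congrArg (fun L => L (Pi.single m 1)) hcrit
  simp only [_root_.sum_apply, smul_apply, ContinuousLinearMap.proj_apply, Pi.single_apply,
    smul_eq_mul, mul_ite, mul_one, mul_zero, sum_ite_eq', mem_univ, ↓reduceIte, zero_apply] at hm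
  rw [show featureMean φ θ m - μ m = θ m / Λ m by linarith]
  field_simp [hΛ m]

theorem potential_lower_bound [Nonempty X] (φ : M → X → ℝ) {Λ : M → ℝ} (hΛ : ∀ m, 0 < Λ m)
    (μ : M → ℝ) {L : ℝ} (hL₀ : 0 < L) (hL : ∀ m, Λ m ≤ L) (x : X) (θ : M → ℝ) :
    (2 * L)⁻¹ * ‖θ‖ ^ 2 - (∑ m, |μ m - φ m x|) * ‖θ‖ ≤ potential φ Λ μ θ := by
  have hquad : (2 * L)⁻¹ * ‖θ‖ ^ 2 ≤ ∑ m, θ m ^ 2 / (2 * Λ m) :=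
    calc (2 * L)⁻¹ * ‖θ‖ ^ 2 ≤ (2 * L)⁻¹ * ∑ m, θ m ^ 2 := by
          gcongr; exact sq_norm_le_sum_sq θ
      _ = ∑ m, θ m ^ 2 / (2 * L) := by rw [mul_sum]; exact sum_congr rfl fun _ _ => by ring
      _ ≤ ∑ m, θ m ^ 2 / (2 * Λ m) := by
          gcongr with m
          · linarith [hΛ m]
          · exact hL m
  have hlin : -((∑ m, |μ m - φ m x|) * ‖θ‖) ≤ ∑ m, μ m * θ m - energy φ θ x := by
    have hsplit : ∑ m, θ m * (μ m - φ m x) = ∑ m, μ m * θ m - energy φ θ x := by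
      simp only [energy, ← sum_sub_distrib]
      exact sum_congr rfl fun _ _ => by ring
    linarith [abs_sum_mul_le θ fun m => μ m - φ m x, neg_abs_le (∑ m, θ m * (μ m - φ m x))]
  have hlog := neg_energy_le_log_partitionFunction φ θ x
  rw [potential, sum_add_distrib]
  linarith

theorem tendsto_potential_cocompact [Nonempty X] (φ : M → X → ℝ) {Λ : M → ℝ}
    (hΛ : ∀ m, 0 < Λ m) (μ : M → ℝ) :
    Tendsto (potential φ Λ μ) (cocompact (M → ℝ)) atTop := by
  obtain ⟨L, hL⟩ := Finite.bddAbove_range Λ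
  have hL' : ∀ m, Λ m ≤ max L 1 := fun m => (hL ⟨m, rfl⟩).trans (le_max_left L 1)
  exact tendsto_cocompact_atTop_of_sq_norm_le (by positivity)
    (potential_lower_bound φ hΛ μ (by positivity) hL' (Classical.arbitrary X))

end GibbsFamily

end

open GibbsFamily

open Finset in
/-- **Corollary (finite discrete case).** For a finite state space `X`, features `φ m`, the
Gibbs distribution `π θ x = exp(−Σ_m θ m * φ m x) / Z θ` with
`Z θ = Σ_x exp(−Σ_m θ m * φ m x)` and feature means `η m θ = Σ_x π θ x * φ m x`, the
fixed-point equation `θ m = Λ m * (η m θ − μ m)` has a solution for every `μ` and all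
positive `Λ m`. -/
theorem exists_fixed_point_gibbs_finite
    (X : Type*) [Fintype X] [Nonempty X]
    (M : Type*) [Fintype M]
    (φ : M → X → ℝ) (Λ : M → ℝ) (hΛ : ∀ m, 0 < Λ m) (μ : M → ℝ) :
    ∃ θ : M → ℝ, ∀ m, θ m =
      Λ m * ((∑ x : X, (Real.exp (-∑ m' : M, θ m' * φ m' x) /
                          ∑ y : X, Real.exp (-∑ m' : M, θ m' * φ m' y)) * φ m x) - μ m) := by
  have hΛ₀ : ∀ m, Λ m ≠ 0 := fun m => (hΛ m).ne'
  obtain ⟨θ, hθ⟩ :=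
    (continuous_potential φ hΛ₀ μ).exists_forall_le (tendsto_potential_cocompact φ hΛ μ)
  exact ⟨θ, eq_mul_featureMean_sub_of_isMinimum φ hΛ₀ μ hθ⟩
end

section
/- Let X ⊂ ℝ^N be a bounded closed measurable set with positive Lebesgue measure, M a finite index set, and φ_m : X → ℝ bounded measurable functions for m ∈ M. For θ ∈ ℝ^M define Z_θ = ∫_X exp(−Σ_m θ_m φ_m(x)) dx, the Gibbs density π_θ(x) = exp(−Σ_m θ_m φ_m(x)) / Z_θ on X, and η_m(θ) = ∫_X φ_m(x) π_θ(x) dx. Then for every μ ∈ ℝ^M and every choice of Λ_m > 0 (m ∈ M), there exists θ ∈ ℝ^M such that θ_m = Λ_m(η_m(θ) − μ_m) for every m ∈ M. -/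
/-!
The fixed-point equations `θ m / Λ m = η m θ - μ m` are the critical-point equations of
`G θ = ∑ m, (θ m ^ 2 / (2 * Λ m) + μ m * θ m) + log Z θ`, because differentiating under the
integral gives `∂ₘ log Z = -η m`. Bounded features make `log Z` grow at most linearly, so the
quadratic term makes `G` coercive; a continuous coercive function attains a global minimum, and
there all partial derivatives of `G` vanish.
-/

open MeasureTheory Filter Topology Real

theorem sq_norm_div_le_sum_sq_div {M : Type*} [Fintype M] [Nonempty M] {Λ : M → ℝ}
    (hΛ : ∀ m, 0 < Λ m) (θ : M → ℝ) :
    ‖θ‖ ^ 2 / (2 * ∑ m, Λ m) ≤ ∑ m, θ m ^ 2 / (2 * Λ m) := by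
  obtain ⟨m₀, hm₀ : ‖θ m₀‖ = ‖θ‖⟩ := (IsGreatest.pi_norm θ).1
  have hΛ_le : Λ m₀ ≤ ∑ m, Λ m :=
    Finset.single_le_sum (fun m _ => (hΛ m).le) (Finset.mem_univ m₀)
  have hΛ₀ := hΛ m₀
  calc ‖θ‖ ^ 2 / (2 * ∑ m, Λ m) = θ m₀ ^ 2 / (2 * ∑ m, Λ m) := by
        rw [← hm₀, Real.norm_eq_abs, sq_abs]
    _ ≤ θ m₀ ^ 2 / (2 * Λ m₀) := by gcongr
    _ ≤ ∑ m, θ m ^ 2 / (2 * Λ m) :=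
        Finset.single_le_sum (f := fun m => θ m ^ 2 / (2 * Λ m))
          (fun m _ => by have := hΛ m; positivity) (Finset.mem_univ m₀)

theorem tendsto_sq_div_sub_mul_add_atTop {d : ℝ} (hd : 0 < d) (b c : ℝ) :
    Tendsto (fun s : ℝ => s ^ 2 / d - b * s + c) atTop atTop := by
  have h : Tendsto (fun s : ℝ => s * (s / d + -b)) atTop atTop :=
    tendsto_id.atTop_mul_atTop₀
      (tendsto_atTop_add_const_right _ (-b) (tendsto_id.atTop_div_const hd))
  exact tendsto_atTop_add_const_right _ c (h.congr fun s => by ring)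

namespace Gibbs

variable {α M : Type*} [Fintype M]

def energy (φ : M → α → ℝ) (θ : M → ℝ) (x : α) : ℝ := ∑ m, θ m * φ m x

section Energy

variable {φ : M → α → ℝ} {C : M → ℝ}

theorem energy_add_smul (θ v : M → ℝ) (t : ℝ) (x : α) :
    energy φ (θ + t • v) x = energy φ θ x + t * energy φ v x := by
  simp only [energy, Pi.add_apply, Pi.smul_apply, smul_eq_mul, Finset.mul_sum,
    ← Finset.sum_add_distrib]
  exact Finset.sum_congr rfl fun m _ => by ring

theorem energy_single [DecidableEq M] (m : M) : energy φ (Pi.single m 1) = φ m := by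
  funext x
  simp [energy, Pi.single_apply]

theorem continuous_energy (x : α) : Continuous fun θ => energy φ θ x := by
  unfold energy
  fun_prop

theorem abs_energy_le {x : α} (hx : ∀ m, |φ m x| ≤ C m) (θ : M → ℝ) :
    |energy φ θ x| ≤ ‖θ‖ * ∑ m, C m := by
  rw [Finset.mul_sum]
  refine (Finset.abs_sum_le_sum_abs _ _).trans (Finset.sum_le_sum fun m _ => ?_)
  rw [abs_mul]
  exact mul_le_mul (norm_le_pi_norm θ m) (hx m) (abs_nonneg _) (norm_nonneg θ)

end Energy

variable [MeasurableSpace α]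

noncomputable section

def partitionFunction (ν : Measure α) (φ : M → α → ℝ) (θ : M → ℝ) : ℝ :=
  ∫ x, exp (-energy φ θ x) ∂ν

def density (ν : Measure α) (φ : M → α → ℝ) (θ : M → ℝ) (x : α) : ℝ :=
  exp (-energy φ θ x) / partitionFunction ν φ θ

def featureMean (ν : Measure α) (φ : M → α → ℝ) (θ : M → ℝ) (m : M) : ℝ :=
  ∫ x, φ m x * density ν φ θ x ∂ν

def potential (Λ μ : M → ℝ) (ν : Measure α) (φ : M → α → ℝ) (θ : M → ℝ) : ℝ :=
  ∑ m, (θ m ^ 2 / (2 * Λ m) + μ m * θ m) + log (partitionFunction ν φ θ)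

end

variable {ν : Measure α} {φ : M → α → ℝ} {C : M → ℝ}

/-- `|C m|` rather than `C m`: the bound has to be monotone in `‖θ‖`, and `C m ≥ 0` is forced
only when `ν ≠ 0`. -/
theorem ae_abs_energy_le (hC : ∀ m, ∀ᵐ x ∂ν, |φ m x| ≤ C m) :
    ∀ᵐ x ∂ν, ∀ θ : M → ℝ, |energy φ θ x| ≤ ‖θ‖ * ∑ m, |C m| :=
  (ae_all_iff.2 hC).mono fun _ hx => abs_energy_le fun m => (hx m).trans (le_abs_self _)

theorem aestronglyMeasurable_energy (hφ : ∀ m, AEStronglyMeasurable (φ m) ν) (θ : M → ℝ) :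
    AEStronglyMeasurable (energy φ θ) ν := by
  unfold energy
  fun_prop

theorem aestronglyMeasurable_exp_neg_energy (hφ : ∀ m, AEStronglyMeasurable (φ m) ν)
    (θ : M → ℝ) : AEStronglyMeasurable (fun x => exp (-energy φ θ x)) ν :=
  continuous_exp.comp_aestronglyMeasurable (aestronglyMeasurable_energy hφ θ).neg

theorem integrable_exp_neg_energy [IsFiniteMeasure ν] (hφ : ∀ m, AEStronglyMeasurable (φ m) ν)
    (hC : ∀ m, ∀ᵐ x ∂ν, |φ m x| ≤ C m) (θ : M → ℝ) :
    Integrable (fun x => exp (-energy φ θ x)) ν := by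
  refine .of_bound (aestronglyMeasurable_exp_neg_energy hφ θ) (exp (‖θ‖ * ∑ m, |C m|)) ?_
  filter_upwards [ae_abs_energy_le hC] with x hx
  rw [norm_of_nonneg (exp_pos _).le]
  exact exp_le_exp.2 ((neg_le_abs _).trans (hx θ))

theorem le_partitionFunction [IsFiniteMeasure ν] (hφ : ∀ m, AEStronglyMeasurable (φ m) ν)
    (hC : ∀ m, ∀ᵐ x ∂ν, |φ m x| ≤ C m) (θ : M → ℝ) :
    exp (-(‖θ‖ * ∑ m, |C m|)) * ν.real Set.univ ≤ partitionFunction ν φ θ :=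
  calc exp (-(‖θ‖ * ∑ m, |C m|)) * ν.real Set.univ = ∫ _, exp (-(‖θ‖ * ∑ m, |C m|)) ∂ν := by
        rw [integral_const, smul_eq_mul, mul_comm]
    _ ≤ partitionFunction ν φ θ := by
        refine integral_mono_ae (integrable_const _) (integrable_exp_neg_energy hφ hC θ) ?_
        filter_upwards [ae_abs_energy_le hC] with x hx
        exact exp_le_exp.2 (neg_le_neg ((le_abs_self _).trans (hx θ)))

theorem partitionFunction_pos [IsFiniteMeasure ν] [NeZero ν]
    (hφ : ∀ m, AEStronglyMeasurable (φ m) ν) (hC : ∀ m, ∀ᵐ x ∂ν, |φ m x| ≤ C m) (θ : M → ℝ) :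
    0 < partitionFunction ν φ θ :=
  (mul_pos (exp_pos _) measureReal_univ_pos).trans_le (le_partitionFunction hφ hC θ)

theorem continuous_partitionFunction [IsFiniteMeasure ν]
    (hφ : ∀ m, AEStronglyMeasurable (φ m) ν) (hC : ∀ m, ∀ᵐ x ∂ν, |φ m x| ≤ C m) :
    Continuous (partitionFunction ν φ) := by
  refine continuous_iff_continuousAt.2 fun θ₀ => continuousAt_of_dominated
    (F := fun θ x => exp (-energy φ θ x)) (bound := fun _ => exp ((‖θ₀‖ + 1) * ∑ m, |C m|))
    ?_ ?_ (integrable_const _) ?_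
  · exact .of_forall fun θ => aestronglyMeasurable_exp_neg_energy hφ θ
  · filter_upwards [Metric.ball_mem_nhds θ₀ one_pos] with θ hθ
    filter_upwards [ae_abs_energy_le hC] with x hx
    have hθ_norm : ‖θ‖ ≤ ‖θ₀‖ + 1 := by
      linarith [norm_le_norm_add_norm_sub' θ θ₀, (mem_ball_iff_norm.1 hθ).le]
    rw [norm_of_nonneg (exp_pos _).le]
    refine exp_le_exp.2 ((neg_le_abs _).trans ((hx θ).trans ?_))
    exact mul_le_mul_of_nonneg_right hθ_norm (by positivity)
  · exact .of_forall fun x => ((continuous_energy x).neg.rexp).continuousAt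

theorem hasDerivAt_partitionFunction_add_smul [IsFiniteMeasure ν]
    (hφ : ∀ m, AEStronglyMeasurable (φ m) ν) (hC : ∀ m, ∀ᵐ x ∂ν, |φ m x| ≤ C m)
    (θ v : M → ℝ) :
    HasDerivAt (fun t : ℝ => partitionFunction ν φ (θ + t • v))
      (-∫ x, energy φ v x * exp (-energy φ θ x) ∂ν) 0 := by
  have hderiv := hasDerivAt_integral_of_dominated_loc_of_deriv_le (μ := ν) (x₀ := (0 : ℝ))
    (F := fun t x => exp (-energy φ (θ + t • v) x))
    (F' := fun t x => -(energy φ v x * exp (-energy φ (θ + t • v) x)))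
    (bound := fun _ => ‖v‖ * (∑ m, |C m|) * exp ((‖θ‖ + ‖v‖) * ∑ m, |C m|))
    (Metric.ball_mem_nhds 0 one_pos)
    (.of_forall fun t => aestronglyMeasurable_exp_neg_energy hφ _)
    (integrable_exp_neg_energy hφ hC _)
    ((aestronglyMeasurable_energy hφ v).mul (aestronglyMeasurable_exp_neg_energy hφ _)).neg
    ?_ (integrable_const _) ?_
  · simpa [partitionFunction, integral_neg] using hderiv.2
  · filter_upwards [ae_abs_energy_le hC] with x hx t ht
    have ht : |t| ≤ 1 := by simpa using (Metric.mem_ball.1 ht).le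
    have hnorm : ‖θ + t • v‖ ≤ ‖θ‖ + ‖v‖ := by
      calc ‖θ + t • v‖ ≤ ‖θ‖ + |t| * ‖v‖ := by
            simpa [norm_smul] using norm_add_le θ (t • v)
        _ ≤ ‖θ‖ + ‖v‖ := by gcongr; exact mul_le_of_le_one_left (norm_nonneg v) ht
    rw [norm_neg, norm_mul, norm_of_nonneg (exp_pos _).le, Real.norm_eq_abs]
    gcongr
    · exact hx v
    · exact (neg_le_abs _).trans ((hx _).trans (by gcongr))
  · refine .of_forall fun x t _ => ?_
    have h := (((hasDerivAt_id t).mul_const (energy φ v x)).const_add (energy φ θ x)).neg.exp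
    simp_rw [energy_add_smul]
    exact h.congr_deriv (by simp [mul_comm])

theorem continuous_potential [IsFiniteMeasure ν] [NeZero ν]
    (hφ : ∀ m, AEStronglyMeasurable (φ m) ν) (hC : ∀ m, ∀ᵐ x ∂ν, |φ m x| ≤ C m)
    (Λ μ : M → ℝ) : Continuous (potential Λ μ ν φ) :=
  (continuous_finsetSum _ fun m _ => by fun_prop).add
    ((continuous_partitionFunction hφ hC).log fun θ => (partitionFunction_pos hφ hC θ).ne')

theorem le_potential [Nonempty M] [IsFiniteMeasure ν] [NeZero ν]
    (hφ : ∀ m, AEStronglyMeasurable (φ m) ν) (hC : ∀ m, ∀ᵐ x ∂ν, |φ m x| ≤ C m)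
    {Λ : M → ℝ} (hΛ : ∀ m, 0 < Λ m) (μ θ : M → ℝ) :
    ‖θ‖ ^ 2 / (2 * ∑ m, Λ m) - (∑ m, (|C m| + |μ m|)) * ‖θ‖ + log (ν.real Set.univ)
      ≤ potential Λ μ ν φ θ := by
  have hquad := sq_norm_div_le_sum_sq_div hΛ θ
  have hlin : -((∑ m, |μ m|) * ‖θ‖) ≤ ∑ m, μ m * θ m := by
    rw [Finset.sum_mul, ← Finset.sum_neg_distrib]
    refine Finset.sum_le_sum fun m _ => ?_
    calc -(|μ m| * ‖θ‖) ≤ -|μ m * θ m| := by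
          rw [abs_mul]; gcongr; exact norm_le_pi_norm θ m
      _ ≤ μ m * θ m := neg_abs_le _
  have hlog : -(‖θ‖ * ∑ m, |C m|) + log (ν.real Set.univ) ≤ log (partitionFunction ν φ θ) := by
    have h := log_le_log (mul_pos (exp_pos _) measureReal_univ_pos) (le_partitionFunction hφ hC θ)
    rwa [log_mul (exp_pos _).ne' measureReal_univ_pos.ne', log_exp] at h
  rw [potential, Finset.sum_add_distrib, Finset.sum_add_distrib]
  linarith

theorem tendsto_potential_cocompact [Nonempty M] [IsFiniteMeasure ν] [NeZero ν]
    (hφ : ∀ m, AEStronglyMeasurable (φ m) ν) (hC : ∀ m, ∀ᵐ x ∂ν, |φ m x| ≤ C m)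
    {Λ : M → ℝ} (hΛ : ∀ m, 0 < Λ m) (μ : M → ℝ) :
    Tendsto (potential Λ μ ν φ) (cocompact (M → ℝ)) atTop := by
  have hΛ_sum : 0 < 2 * ∑ m, Λ m :=
    mul_pos two_pos (Finset.sum_pos (fun m _ => hΛ m) Finset.univ_nonempty)
  exact tendsto_atTop_mono (le_potential hφ hC hΛ μ)
    ((tendsto_sq_div_sub_mul_add_atTop hΛ_sum _ _).comp tendsto_norm_cocompact_atTop)

theorem exists_forall_potential_le [Nonempty M] [IsFiniteMeasure ν] [NeZero ν]
    (hφ : ∀ m, AEStronglyMeasurable (φ m) ν) (hC : ∀ m, ∀ᵐ x ∂ν, |φ m x| ≤ C m)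
    {Λ : M → ℝ} (hΛ : ∀ m, 0 < Λ m) (μ : M → ℝ) :
    ∃ θ, ∀ θ', potential Λ μ ν φ θ ≤ potential Λ μ ν φ θ' :=
  (continuous_potential hφ hC Λ μ).exists_forall_le' 0
    ((tendsto_potential_cocompact hφ hC hΛ μ).eventually_ge_atTop _)

theorem hasDerivAt_potential_add_smul [IsFiniteMeasure ν] [NeZero ν]
    (hφ : ∀ m, AEStronglyMeasurable (φ m) ν) (hC : ∀ m, ∀ᵐ x ∂ν, |φ m x| ≤ C m)
    (Λ μ θ v : M → ℝ) :
    HasDerivAt (fun t : ℝ => potential Λ μ ν φ (θ + t • v))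
      (∑ m, (θ m / Λ m + μ m) * v m
        - (∫ x, energy φ v x * exp (-energy φ θ x) ∂ν) / partitionFunction ν φ θ) 0 := by
  have hquad : HasDerivAt
      (fun t : ℝ => ∑ m, ((θ + t • v) m ^ 2 / (2 * Λ m) + μ m * (θ + t • v) m))
      (∑ m, (θ m / Λ m + μ m) * v m) 0 := by
    refine HasDerivAt.fun_sum fun m _ => ?_
    have hline : HasDerivAt (fun t : ℝ => (θ + t • v) m) (v m) 0 := by
      simpa using ((hasDerivAt_id (0 : ℝ)).mul_const (v m)).const_add (θ m)
    exact (((hline.pow 2).div_const (2 * Λ m)).add (hline.const_mul (μ m))).congr_deriv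
      (by simp; ring)
  have hlog := (hasDerivAt_partitionFunction_add_smul hφ hC θ v).log
    (by simpa using (partitionFunction_pos hφ hC θ).ne')
  simp only [zero_smul, add_zero] at hlog
  exact (hquad.add hlog).congr_deriv (by ring)

theorem eq_of_forall_potential_le [IsFiniteMeasure ν] [NeZero ν]
    (hφ : ∀ m, AEStronglyMeasurable (φ m) ν) (hC : ∀ m, ∀ᵐ x ∂ν, |φ m x| ≤ C m)
    {Λ : M → ℝ} (hΛ : ∀ m, Λ m ≠ 0) {μ θ : M → ℝ}
    (hθ : ∀ θ', potential Λ μ ν φ θ ≤ potential Λ μ ν φ θ') (m : M) :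
    θ m = Λ m * (featureMean ν φ θ m - μ m) := by
  classical
  have hmin : IsLocalMin (fun t : ℝ => potential Λ μ ν φ (θ + t • Pi.single m 1)) 0 :=
    .of_forall fun t => by simpa using hθ (θ + t • Pi.single m 1)
  have hcrit := hmin.hasDerivAt_eq_zero (hasDerivAt_potential_add_smul hφ hC Λ μ θ (Pi.single m 1))
  have hmean : featureMean ν φ θ m
      = (∫ x, φ m x * exp (-energy φ θ x) ∂ν) / partitionFunction ν φ θ := by
    simp only [featureMean, density, mul_div_assoc', integral_div]
  rw [energy_single] at hcrit
  simp only [Pi.single_apply, mul_ite, mul_one, mul_zero, Finset.sum_ite_eq',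
    Finset.mem_univ, if_true] at hcrit
  rw [hmean, show _ - μ m = θ m / Λ m by linarith, mul_div_cancel₀ _ (hΛ m)]

theorem exists_fixed_point [IsFiniteMeasure ν] [NeZero ν]
    (hφ : ∀ m, AEStronglyMeasurable (φ m) ν) (hC : ∀ m, ∀ᵐ x ∂ν, |φ m x| ≤ C m)
    {Λ : M → ℝ} (hΛ : ∀ m, 0 < Λ m) (μ : M → ℝ) :
    ∃ θ : M → ℝ, ∀ m, θ m = Λ m * (featureMean ν φ θ m - μ m) := by
  rcases isEmpty_or_nonempty M with hM | hM
  · exact ⟨0, isEmptyElim⟩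
  obtain ⟨θ, hθ⟩ := exists_forall_potential_le hφ hC hΛ μ
  exact ⟨θ, eq_of_forall_potential_le hφ hC (fun m => (hΛ m).ne') hθ⟩

end Gibbs

theorem exists_fixed_point_gibbs_continuous_general
    (N : ℕ) (X : Set (Fin N → ℝ))
    (hXbdd : Bornology.IsBounded X)
    (hXmeas : MeasurableSet X) (hXpos : 0 < volume X)
    (M : Type*) [Fintype M]
    (φ : M → (Fin N → ℝ) → ℝ)
    (hφmeas : ∀ m, Measurable (φ m))
    (hφbdd : ∀ m, ∃ C : ℝ, ∀ x ∈ X, |φ m x| ≤ C)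
    (Λ : M → ℝ) (hΛ : ∀ m, 0 < Λ m) (μ : M → ℝ) :
    ∃ θ : M → ℝ, ∀ m, θ m =
      Λ m * ((∫ x in X, φ m x *
                (Real.exp (-∑ m' : M, θ m' * φ m' x) /
                  ∫ y in X, Real.exp (-∑ m' : M, θ m' * φ m' y))) - μ m) := by
  have : IsFiniteMeasure (volume.restrict X) :=
    isFiniteMeasure_restrict.2 hXbdd.measure_lt_top.ne
  have : NeZero (volume.restrict X) := ⟨by simpa [Measure.restrict_eq_zero] using hXpos.ne'⟩
  choose C hC using hφbdd
  -- `featureMean (volume.restrict X) φ θ m` unfolds to the integral in the statement.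
  exact Gibbs.exists_fixed_point (fun m => (hφmeas m).aestronglyMeasurable)
    (fun m => ae_restrict_of_forall_mem hXmeas (hC m)) hΛ μ

/-- **Corollary (continuous case).** Let `X ⊆ ℝ^N` be a bounded closed measurable set of
positive Lebesgue measure and let the features `φ m` be bounded measurable functions. With
`Z θ = ∫_X exp(−Σ_m θ m * φ m x) dx`, Gibbs density `π θ x = exp(−Σ_m θ m * φ m x) / Z θ`
and feature means `η m θ = ∫_X φ m x * π θ x dx`, the fixed-point equation
`θ m = Λ m * (η m θ − μ m)` has a solution for every `μ` and all positive `Λ m`. -/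
theorem exists_fixed_point_gibbs_continuous
    (N : ℕ) (X : Set (Fin N → ℝ))
    (hXbdd : Bornology.IsBounded X) (hXclosed : IsClosed X)
    (hXmeas : MeasurableSet X) (hXpos : 0 < volume X)
    (M : Type*) [Fintype M]
    (φ : M → (Fin N → ℝ) → ℝ)
    (hφmeas : ∀ m, Measurable (φ m))
    (hφbdd : ∀ m, ∃ C : ℝ, ∀ x ∈ X, |φ m x| ≤ C)
    (Λ : M → ℝ) (hΛ : ∀ m, 0 < Λ m) (μ : M → ℝ) :
    ∃ θ : M → ℝ, ∀ m, θ m =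
      Λ m * ((∫ x in X, φ m x *
                (Real.exp (-∑ m' : M, θ m' * φ m' x) /
                  ∫ y in X, Real.exp (-∑ m' : M, θ m' * φ m' y))) - μ m) :=
  exists_fixed_point_gibbs_continuous_general N X hXbdd hXmeas hXpos M φ hφmeas hφbdd Λ hΛ μ
end

section
/- Consider the exponential family on ℝ with features φ_1(x) = x and φ_2(x) = x², i.e., for θ = (θ_1, θ_2) with θ_2 > 0 let π_θ be the probability density proportional to exp(−θ_1 x − θ_2 x²) on ℝ (a normal distribution with mean m = −θ_1/(2θ_2) and variance s² = 1/(2θ_2)), and let η_1(θ) = ∫ x π_θ(x) dx and η_2(θ) = ∫ x² π_θ(x) dx. Then for every (μ_1, μ_2) ∈ ℝ² and every Λ_1 > 0, Λ_2 > 0, there exists θ = (θ_1, θ_2) with θ_2 > 0 such that θ_1 = Λ_1(η_1(θ) − μ_1) and θ_2 = Λ_2(η_2(θ) − μ_2). -/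
/-!
Given `θ₂ > 0`, the normalized density `exp (-(θ₁ x + θ₂ x²)) / Z` is the Gaussian density with
mean `m = -θ₁ / (2 θ₂)` and variance `1 / (2 θ₂)`, so `η₁ = m` and `η₂ = m² + 1 / (2 θ₂)`.
For fixed `θ₂ = b` the first equation is linear in `θ₁` and forces `m = Λ₁ μ₁ / (2 b + Λ₁)`.
The second equation then becomes a scalar equation in `b > 0`, whose two sides differ by a
continuous function tending to `+∞` as `b → 0⁺` (through the variance term) and to `-∞` as
`b → ∞`; the intermediate value theorem gives a root.
-/

open MeasureTheory ProbabilityTheory Real Filter Set Topology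
open scoped NNReal

theorem integral_sq_gaussianReal (μ : ℝ) (v : ℝ≥0) :
    ∫ x, x ^ 2 ∂gaussianReal μ v = μ ^ 2 + v := by
  have h := variance_eq_sub (memLp_id_gaussianReal (μ := μ) (v := v) 2)
  simp only [variance_id_gaussianReal, Pi.pow_apply, id_eq, integral_id_gaussianReal] at h
  linarith

theorem integral_mul_gaussianPDFReal {μ : ℝ} {v : ℝ≥0} (hv : v ≠ 0) (f : ℝ → ℝ) :
    ∫ x, f x * gaussianPDFReal μ v x = ∫ x, f x ∂gaussianReal μ v := by
  simp_rw [integral_gaussianReal_eq_integral_smul hv, smul_eq_mul, mul_comm]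

theorem div_integral_eq_of_eq_const_mul {α : Type*} [MeasurableSpace α] {ν : Measure α}
    {f g : α → ℝ} {c : ℝ} (hc : c ≠ 0) (hfg : ∀ x, f x = c * g x) (hg : ∫ x, g x ∂ν = 1)
    (x : α) : f x / ∫ y, f y ∂ν = g x := by
  simp_rw [hfg, integral_const_mul, hg, mul_one, mul_div_cancel_left₀ _ hc]

theorem exp_neg_eq_mul_gaussianPDFReal (θ₁ : ℝ) {θ₂ : ℝ} (hθ₂ : 0 < θ₂) (x : ℝ) :
    exp (-(θ₁ * x + θ₂ * x ^ 2)) = (exp (θ₁ ^ 2 / (4 * θ₂)) * √(π / θ₂)) *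
      gaussianPDFReal (-θ₁ / (2 * θ₂)) (1 / (2 * θ₂)).toNNReal x := by
  have hv : ((1 / (2 * θ₂)).toNNReal : ℝ) = 1 / (2 * θ₂) := Real.coe_toNNReal _ (by positivity)
  have hsqrt : √(2 * π * (1 / (2 * θ₂))) = √(π / θ₂) := by congr 1; field_simp
  have hsqrt_pos : 0 < √(π / θ₂) := by positivity
  rw [gaussianPDFReal, hv, hsqrt, mul_assoc, mul_inv_cancel_left₀ hsqrt_pos.ne', ← exp_add]
  congr 1
  field_simp
  ring

theorem exp_div_integral_exp_eq_gaussianPDFReal (θ₁ : ℝ) {θ₂ : ℝ} (hθ₂ : 0 < θ₂) (x : ℝ) :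
    exp (-(θ₁ * x + θ₂ * x ^ 2)) / ∫ y, exp (-(θ₁ * y + θ₂ * y ^ 2)) =
      gaussianPDFReal (-θ₁ / (2 * θ₂)) (1 / (2 * θ₂)).toNNReal x :=
  div_integral_eq_of_eq_const_mul (by positivity) (exp_neg_eq_mul_gaussianPDFReal θ₁ hθ₂)
    (integral_gaussianPDFReal_eq_one _ (by simpa using hθ₂)) x

theorem exists_pos_eq_zero_of_tendsto {f : ℝ → ℝ} (hf : ContinuousOn f (Ioi 0))
    (h0 : Tendsto f (𝓝[>] 0) atTop) (htop : Tendsto f atTop atBot) : ∃ x > 0, f x = 0 :=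
  hf.surjOn_of_tendsto' nonempty_Ioi (by rwa [tendsto_comp_coe_Ioi_atBot])
    (by rwa [tendsto_comp_val_Ioi_atTop]) (mem_univ 0)

/-- The second fixed-point equation at `θ₂ = b`, after eliminating `θ₁` through the first. -/
theorem exists_pos_fixed_point_eliminated {Λ₁ Λ₂ : ℝ} (hΛ₁ : 0 < Λ₁) (hΛ₂ : 0 < Λ₂)
    (μ₁ μ₂ : ℝ) : ∃ b > 0, b = Λ₂ * ((Λ₁ * μ₁ / (2 * b + Λ₁)) ^ 2 + 1 / (2 * b) - μ₂) := by
  set m : ℝ → ℝ := fun b ↦ Λ₁ * μ₁ / (2 * b + Λ₁)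
  set f : ℝ → ℝ := fun b ↦ (Λ₂ / 2 * b⁻¹ + Λ₂ * (m b ^ 2 - μ₂)) + -b
  have hm (b : ℝ) (hb : 0 ≤ b) : ContinuousAt m b :=
    continuousAt_const.div (by fun_prop) (by positivity)
  have hf : ContinuousOn f (Ioi 0) := fun b (hb : 0 < b) ↦ by
    have := hm b hb.le
    exact ContinuousAt.continuousWithinAt (by fun_prop (disch := positivity))
  have hf_zero : Tendsto f (𝓝[>] 0) atTop := by
    have hm_zero : Tendsto m (𝓝[>] 0) (𝓝 (m 0)) :=
      (hm 0 le_rfl).tendsto.mono_left nhdsWithin_le_nhds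
    exact ((tendsto_inv_nhdsGT_zero.const_mul_atTop (by positivity)).atTop_add
      ((hm_zero.pow 2).sub_const μ₂ |>.const_mul Λ₂)).atTop_add
        (tendsto_nhdsWithin_of_tendsto_nhds tendsto_id.neg)
  have hf_top : Tendsto f atTop atBot := by
    have hm_top : Tendsto m atTop (𝓝 0) := tendsto_const_nhds.div_atTop
      (tendsto_atTop_add_const_right _ _ (tendsto_id.const_mul_atTop two_pos))
    exact ((tendsto_inv_atTop_zero.const_mul _).add
      ((hm_top.pow 2).sub_const μ₂ |>.const_mul Λ₂)).add_atBot tendsto_neg_atTop_atBot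
  obtain ⟨b, hb, hroot⟩ := exists_pos_eq_zero_of_tendsto hf hf_zero hf_top
  exact ⟨b, hb, by linear_combination -hroot⟩

/-- **Example 1 of the paper (existence part).** For the Gaussian exponential family with
density `π θ x ∝ exp(−θ₁ x − θ₂ x²)` (with `θ₂ > 0`) and feature means
`η₁ θ = ∫ x π_θ(x) dx`, `η₂ θ = ∫ x² π_θ(x) dx`, the fixed-point equations
`θ₁ = Λ₁ (η₁ θ − μ₁)` and `θ₂ = Λ₂ (η₂ θ − μ₂)` have a solution with `θ₂ > 0` for every
target `(μ₁, μ₂) ∈ ℝ²` and all positive `Λ₁, Λ₂`. -/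
theorem exists_fixed_point_gaussian
    (Λ₁ Λ₂ : ℝ) (hΛ₁ : 0 < Λ₁) (hΛ₂ : 0 < Λ₂) (μ₁ μ₂ : ℝ) :
    ∃ θ₁ θ₂ : ℝ, 0 < θ₂ ∧
      θ₁ = Λ₁ * ((∫ x : ℝ, x * (Real.exp (-(θ₁ * x + θ₂ * x ^ 2)) /
                    ∫ y : ℝ, Real.exp (-(θ₁ * y + θ₂ * y ^ 2)))) - μ₁) ∧
      θ₂ = Λ₂ * ((∫ x : ℝ, x ^ 2 * (Real.exp (-(θ₁ * x + θ₂ * x ^ 2)) /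
                    ∫ y : ℝ, Real.exp (-(θ₁ * y + θ₂ * y ^ 2)))) - μ₂) := by
  obtain ⟨b, hb, hfix⟩ := exists_pos_fixed_point_eliminated hΛ₁ hΛ₂ μ₁ μ₂
  set m := Λ₁ * μ₁ / (2 * b + Λ₁) with hm
  have hv : (1 / (2 * b)).toNNReal ≠ 0 := by simpa using hb
  have hmean : -(-(2 * b * m)) / (2 * b) = m := by field_simp
  refine ⟨-(2 * b * m), b, hb, ?_, ?_⟩ <;>
    simp only [exp_div_integral_exp_eq_gaussianPDFReal _ hb, integral_mul_gaussianPDFReal hv,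
      integral_id_gaussianReal, integral_sq_gaussianReal, hmean]
  · rw [hm]
    field_simp
    ring
  · rwa [Real.coe_toNNReal _ (by positivity)]
end

section
/- Let X be a finite nonempty type, M a finite index set, φ_m : X → ℝ feature functions, Λ_m > 0 weights, and μ ∈ ℝ^M a target vector. For a probability distribution p on X define η_m(p) = Σ_x p(x) φ_m(x), the Shannon entropy H(p) = −Σ_x p(x) log p(x) (with the convention 0 log 0 = 0), and the target function L(p) = (1/2) Σ_m Λ_m (η_m(p) − μ_m)² − H(p). For θ ∈ ℝ^M let π_θ(x) = exp(−Σ_m θ_m φ_m(x)) / Z_θ with Z_θ = Σ_x exp(−Σ_m θ_m φ_m(x)). If θ* ∈ ℝ^M satisfies θ*_m = Λ_m(η_m(π_{θ*}) − μ_m) for all m ∈ M, then L(π_{θ*}) ≤ L(p) for every probability distribution p on X. -/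
/-- **Optimality claim of Section 3.1.** On a finite state space `X`, with feature means
`η m p = Σ_x p x * φ m x`, entropy `H p = −Σ_x p x * log (p x)` (Mathlib's `Real.log 0 = 0`
realizes the convention `0 log 0 = 0`) and target function
`L p = (1/2) Σ_m Λ m (η m p − μ m)² − H p`, if the Gibbs distribution `π` with parameter
`θ*` satisfies the fixed-point equation `θ* m = Λ m (η m π − μ m)` for all `m`, then `π`
minimizes `L` over all probability distributions `p` on `X`. -/
theorem gibbs_fixed_point_minimizes_target
    (X : Type*) [Fintype X] [Nonempty X]
    (M : Type*) [Fintype M]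
    (φ : M → X → ℝ) (Λ : M → ℝ) (hΛ : ∀ m, 0 < Λ m) (μ : M → ℝ)
    (θs : M → ℝ)
    (Z : ℝ) (hZ : Z = ∑ x : X, Real.exp (-∑ m : M, θs m * φ m x))
    (π : X → ℝ) (hπ : ∀ x, π x = Real.exp (-∑ m : M, θs m * φ m x) / Z)
    (hfix : ∀ m, θs m = Λ m * ((∑ x : X, π x * φ m x) - μ m))
    (L : (X → ℝ) → ℝ)
    (hL : ∀ p : X → ℝ, L p =
      (1 / 2) * (∑ m : M, Λ m * ((∑ x : X, p x * φ m x) - μ m) ^ 2)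
        - (-∑ x : X, p x * Real.log (p x))) :
    ∀ p : X → ℝ, (∀ x, 0 ≤ p x) → (∑ x : X, p x = 1) → L π ≤ L p := by
  intro p hp hps
  have hZpos : 0 < Z := by
    rw [hZ]
    exact Finset.sum_pos (fun x _ => Real.exp_pos _) Finset.univ_nonempty
  have hπpos : ∀ x, 0 < π x := fun x => by
    rw [hπ]; positivity
  have hπsum : ∑ x : X, π x = 1 := by
    simp only [hπ]
    rw [← Finset.sum_div, ← hZ, div_self hZpos.ne']
  have hlog : ∀ x, Real.log (π x) = (-∑ m : M, θs m * φ m x) - Real.log Z := by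
    intro x
    rw [hπ, Real.log_div (Real.exp_pos _).ne' hZpos.ne', Real.log_exp]
  -- pointwise convexity of t ↦ t log t
  have key : ∀ s t : ℝ, 0 < s → 0 ≤ t →
      s * Real.log s + (Real.log s + 1) * (t - s) ≤ t * Real.log t := by
    intro s t hs ht
    rcases eq_or_lt_of_le ht with h | h
    · rw [← h]; nlinarith [hs]
    · have h1 : Real.log (s / t) ≤ s / t - 1 := Real.log_le_sub_one_of_pos (by positivity)
      have h2 : Real.log (s / t) = Real.log s - Real.log t := Real.log_div hs.ne' h.ne'
      have h3 : t * (Real.log s - Real.log t) ≤ t * (s / t - 1) := by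
        rw [← h2]; exact mul_le_mul_of_nonneg_left h1 ht
      have h4 : t * (s / t - 1) = s - t := by field_simp
      nlinarith
  set ηp : M → ℝ := fun m => ∑ x : X, p x * φ m x with hηp
  set ηπ : M → ℝ := fun m => ∑ x : X, π x * φ m x with hηπ
  -- quadratic part
  have hA : ∀ m : M, (1/2) * (Λ m * (ηπ m - μ m) ^ 2) + θs m * (ηp m - ηπ m)
      ≤ (1/2) * (Λ m * (ηp m - μ m) ^ 2) := by
    intro m
    have hf : θs m = Λ m * (ηπ m - μ m) := hfix m
    rw [hf]; nlinarith [mul_nonneg (hΛ m).le (sq_nonneg (ηp m - ηπ m))]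
  have hAsum : (1/2) * (∑ m : M, Λ m * (ηπ m - μ m) ^ 2) + ∑ m : M, θs m * (ηp m - ηπ m)
      ≤ (1/2) * (∑ m : M, Λ m * (ηp m - μ m) ^ 2) := by
    rw [Finset.mul_sum, Finset.mul_sum, ← Finset.sum_add_distrib]
    exact Finset.sum_le_sum fun m _ => hA m
  -- entropy part
  have hBsum : (∑ x : X, π x * Real.log (π x))
      + ∑ x : X, (Real.log (π x) + 1) * (p x - π x)
      ≤ ∑ x : X, p x * Real.log (p x) := by
    rw [← Finset.sum_add_distrib]
    exact Finset.sum_le_sum fun x _ => key _ _ (hπpos x) (hp x)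
  have hC : ∑ x : X, (Real.log (π x) + 1) * (p x - π x)
      = ∑ m : M, θs m * (ηπ m - ηp m) := by
    have e1 : ∀ x, (Real.log (π x) + 1) * (p x - π x)
        = (∑ m : M, θs m * (π x * φ m x - p x * φ m x))
          + (1 - Real.log Z) * (p x - π x) := by
      intro x
      rw [hlog x, Finset.sum_congr rfl
        (fun m _ => by ring :
          ∀ m ∈ Finset.univ, θs m * (π x * φ m x - p x * φ m x)
            = θs m * φ m x * (π x - p x)),
        ← Finset.sum_mul]
      ring
    rw [Finset.sum_congr rfl (fun x _ => e1 x), Finset.sum_add_distrib]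
    have e2 : ∑ x : X, (1 - Real.log Z) * (p x - π x) = 0 := by
      rw [← Finset.mul_sum, Finset.sum_sub_distrib, hps, hπsum]; ring
    rw [e2, add_zero, Finset.sum_comm]
    apply Finset.sum_congr rfl
    intro m _
    rw [← Finset.mul_sum, Finset.sum_sub_distrib]
  rw [hL p, hL π]
  have hC' := hC
  rw [hC'] at hBsum
  have : ∑ m : M, θs m * (ηπ m - ηp m) = -∑ m : M, θs m * (ηp m - ηπ m) := by
    rw [← Finset.sum_neg_distrib]
    exact Finset.sum_congr rfl fun m _ => by ring
  rw [this] at hBsum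
  linarith
end

section
/- Let M be a finite index set, Λ > 0, μ ∈ ℝ^M, and let η^(T) ∈ ℝ^M for T = 1, 2, …. Let a^(0), a^(1), … ∈ ℝ^M satisfy the entropic herding update with step size ε^(T) = 1/(T+1) and equal weights Λ_m = Λ: a_m^(T) = a_m^(T−1) + (1/(T+1))·(Λ(η_m^(T) − μ_m) − a_m^(T−1)) for all T ≥ 1 and m ∈ M. Define w'^(T+1)_m = −((T+1)/Λ)·a_m^(T) for T ≥ 0. Then for every T ≥ 1 and every m ∈ M, w'^(T+1)_m = w'^(T)_m + (μ_m − η_m^(T)); that is, the transformed weights obey exactly the original point-herding weight update. -/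
/-- **Section 4.3 of the paper.** Under the entropic herding weight update with step size
`ε T = 1/(T+1)` and a common moment weight `Λ > 0`,
`a T m = a (T−1) m + (1/(T+1)) * (Λ * (η T m − μ m) − a (T−1) m)`, the transformed weights
`w' (T+1) m = −((T+1)/Λ) * a T m` obey exactly the original point-herding update
`w' (T+1) m = w' T m + (μ m − η T m)` for all `T ≥ 1`. -/
theorem entropic_herding_recovers_point_herding
    (M : Type*) (Λ : ℝ) (hΛ : 0 < Λ) (μ : M → ℝ)
    (η : ℕ → M → ℝ) (a : ℕ → M → ℝ)
    (hupd : ∀ T, 1 ≤ T → ∀ m,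
      a T m = a (T - 1) m + (1 / ((T : ℝ) + 1)) * (Λ * (η T m - μ m) - a (T - 1) m))
    (w' : ℕ → M → ℝ)
    (hw' : ∀ T : ℕ, ∀ m, w' (T + 1) m = -(((T : ℝ) + 1) / Λ) * a T m) :
    ∀ T, 1 ≤ T → ∀ m, w' (T + 1) m = w' T m + (μ m - η T m) := by
  intro T hT m
  obtain ⟨S, rfl⟩ := Nat.exists_eq_add_of_le hT
  have h1 := hw' (1 + S) m
  have h2 := hw' S m
  have h3 := hupd (1 + S) (by omega) m
  simp only [show 1 + S - 1 = S from by omega] at h3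
  rw [show 1 + S + 1 = S + 1 + 1 from by ring] at h1
  rw [Nat.add_comm 1 S] at h1 h3 ⊢
  push_cast at h1 h2 h3 ⊢
  rw [h1, h2, h3]
  have hne : (S : ℝ) + 1 + 1 ≠ 0 := by positivity
  field_simp
  ring
end
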